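/- arXiv:2207.05383 — 3 statements merged into one kernel-verified Lean document; each statement's English description precedes it below -/
import Mathlib

section
/- Let λ > 0 and ρ > 0, and let A and B be independent nonnegative random variables with P(A > r) = e^{−λπr²} and P(B > r) = e^{−λπr²} for all r ≥ 0. Then for every v > 0, P( (A ≥ ρv and B ≥ v) or (A ≥ ρB and B < v) ) = 1/(ρ² + 1) + (ρ²/(ρ² + 1)) · e^{−(ρ² + 1) λπ v²}. (This is the second case of equation (50) in the proof of Lemma 2, giving the probability that an eavesdropper conducts jamming under the DOWJ attack when u ≥ ρv.) -/
open MeasureTheory Real ProbabilityTheory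


lemma aux_hasDerivAt (c b : ℝ) :
    HasDerivAt (fun b : ℝ => -Real.exp (-(c * b ^ 2))) (2 * c * b * Real.exp (-(c * b ^ 2))) b := by
  have h1 : HasDerivAt (fun b : ℝ => -(c * b ^ 2)) (-(c * (2 * b))) b := by
    have := ((hasDerivAt_pow 2 b).const_mul c).neg
    simp at this
    exact this
  have h2 := (Real.hasDerivAt_exp (-(c * b ^ 2))).comp b h1
  have h3 := h2.neg
  exact h3.congr_deriv (by ring)

lemma aux_integral (c : ℝ) (x : ℝ) :
    ∫ b in (0:ℝ)..x, 2 * c * b * Real.exp (-(c * b ^ 2)) = 1 - Real.exp (-(c * x ^ 2)) := by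
  rw [intervalIntegral.integral_eq_sub_of_hasDerivAt (fun b _ => aux_hasDerivAt c b)
    ((Continuous.intervalIntegrable (by fun_prop) 0 x))]
  simp [Real.exp_zero]; ring

lemma ccdf_ge {Ω : Type*} [MeasurableSpace Ω] (μ : Measure Ω) [IsProbabilityMeasure μ]
    (lam : ℝ) (X : Ω → ℝ) (hXnn : ∀ ω, 0 ≤ X ω)
    (hccdf : ∀ r : ℝ, 0 ≤ r → μ {ω | X ω > r} = ENNReal.ofReal (Real.exp (-(lam * π * r ^ 2))))
    (r : ℝ) (hr : 0 ≤ r) :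
    μ {ω | X ω ≥ r} = ENNReal.ofReal (Real.exp (-(lam * π * r ^ 2))) := by
  rcases hr.eq_or_lt with h | h
  · have : {ω | X ω ≥ r} = Set.univ := Set.eq_univ_of_forall fun ω => h ▸ hXnn ω
    rw [this, measure_univ, ← h]
    simp
  · apply le_antisymm
    · have tends : Filter.Tendsto (fun s : ℝ => ENNReal.ofReal (Real.exp (-(lam * π * s ^ 2))))
          (nhdsWithin r (Set.Iio r)) (nhds (ENNReal.ofReal (Real.exp (-(lam * π * r ^ 2))))) := by
        apply Filter.Tendsto.mono_left _ nhdsWithin_le_nhds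
        exact ((ENNReal.continuous_ofReal.comp (by fun_prop)).tendsto r)
      refine ge_of_tendsto tends ?_
      filter_upwards [Ioo_mem_nhdsLT_of_mem (Set.mem_Ioc.2 ⟨h, le_refl r⟩)] with s hs
      rw [← hccdf s hs.1.le]
      exact measure_mono fun ω hω => lt_of_lt_of_le hs.2 hω
    · rw [← hccdf r hr]
      exact measure_mono fun ω hω => le_of_lt (Set.mem_setOf.1 hω)

private theorem stmt4_aux {Ω : Type*} [MeasurableSpace Ω] (μ : Measure Ω) [IsProbabilityMeasure μ]
    (lam ρ : ℝ) (hlam : 0 < lam) (hρ : 0 < ρ)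
    (A B : Ω → ℝ) (hA : Measurable A) (hB : Measurable B)
    (hAnn : ∀ ω, 0 ≤ A ω) (hBnn : ∀ ω, 0 ≤ B ω)
    (hindep : IndepFun A B μ)
    (hAccdf : ∀ r : ℝ, 0 ≤ r → μ {ω | A ω > r} = ENNReal.ofReal (Real.exp (-(lam * π * r ^ 2))))
    (hBccdf : ∀ r : ℝ, 0 ≤ r → μ {ω | B ω > r} = ENNReal.ofReal (Real.exp (-(lam * π * r ^ 2))))
    (v : ℝ) (hv : 0 < v) :
    μ {ω | (A ω ≥ ρ * v ∧ B ω ≥ v) ∨ (A ω ≥ ρ * B ω ∧ B ω < v)} =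
      ENNReal.ofReal (1 / (ρ ^ 2 + 1)
        + (ρ ^ 2 / (ρ ^ 2 + 1)) * Real.exp (-((ρ ^ 2 + 1) * lam * π * v ^ 2))) := by
  have hc1 : 0 < lam * π := by positivity
  set c1 : ℝ := lam * π with hc1def
  set c2 : ℝ := (ρ ^ 2 + 1) * c1 with hc2def
  have hc2 : 0 < c2 := by positivity
  have hρ1 : (0:ℝ) < ρ ^ 2 + 1 := by positivity
  have hAge := ccdf_ge μ lam A hAnn hAccdf
  have hBge := ccdf_ge μ lam B hBnn hBccdf
  -- split the event
  have hE2meas : MeasurableSet {ω | A ω ≥ ρ * B ω ∧ B ω < v} :=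
    (measurableSet_le (hB.const_mul ρ) hA).inter (measurableSet_lt hB measurable_const)
  have hsplit : μ {ω | (A ω ≥ ρ * v ∧ B ω ≥ v) ∨ (A ω ≥ ρ * B ω ∧ B ω < v)} =
      μ {ω | A ω ≥ ρ * v ∧ B ω ≥ v} + μ {ω | A ω ≥ ρ * B ω ∧ B ω < v} := by
    rw [show {ω | (A ω ≥ ρ * v ∧ B ω ≥ v) ∨ (A ω ≥ ρ * B ω ∧ B ω < v)} =
        {ω | A ω ≥ ρ * v ∧ B ω ≥ v} ∪ {ω | A ω ≥ ρ * B ω ∧ B ω < v} from rfl]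
    exact measure_union (by
      rw [Set.disjoint_left]
      rintro ω ⟨-, h1⟩ ⟨-, h2⟩
      exact absurd h1 (not_le.2 h2)) hE2meas
  -- first event
  have hE1 : μ {ω | A ω ≥ ρ * v ∧ B ω ≥ v} = ENNReal.ofReal (Real.exp (-(c2 * v ^ 2))) := by
    have : {ω | A ω ≥ ρ * v ∧ B ω ≥ v} = A ⁻¹' (Set.Ici (ρ * v)) ∩ B ⁻¹' (Set.Ici v) := rfl
    rw [this, hindep.measure_inter_preimage_eq_mul _ _ measurableSet_Ici measurableSet_Ici]
    have h1 : μ (A ⁻¹' Set.Ici (ρ * v)) = ENNReal.ofReal (Real.exp (-(c1 * (ρ * v) ^ 2))) :=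
      hAge (ρ * v) (by positivity)
    have h2 : μ (B ⁻¹' Set.Ici v) = ENNReal.ofReal (Real.exp (-(c1 * v ^ 2))) :=
      hBge v hv.le
    rw [h1, h2, ← ENNReal.ofReal_mul (Real.exp_nonneg _), ← Real.exp_add]
    congr 1
    rw [hc2def]
    ring
  -- second event, via product measure
  haveI : IsProbabilityMeasure (μ.map A) := Measure.isProbabilityMeasure_map hA.aemeasurable
  haveI : IsProbabilityMeasure (μ.map B) := Measure.isProbabilityMeasure_map hB.aemeasurable
  set μA := μ.map A with hμA
  set μB := μ.map B with hμB
  have hprod : μ.map (fun ω => (B ω, A ω)) = μB.prod μA :=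
    (indepFun_iff_map_prod_eq_prod_map_map hB.aemeasurable hA.aemeasurable).1 hindep.symm
  set s : Set (ℝ × ℝ) := {p | p.2 ≥ ρ * p.1 ∧ p.1 < v} with hs
  have hsmeas : MeasurableSet s :=
    (measurableSet_le (measurable_fst.const_mul ρ) measurable_snd).inter
      (measurableSet_lt measurable_fst measurable_const)
  have hE2a : μ {ω | A ω ≥ ρ * B ω ∧ B ω < v} = (μB.prod μA) s := by
    rw [← hprod, Measure.map_apply (hB.prodMk hA) hsmeas]
    rfl
  -- closed form of the inner measure
  set G : ℝ → ENNReal := fun b => Set.indicator (Set.Iio v)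
    (fun b => if 0 ≤ b then ENNReal.ofReal (Real.exp (-(c1 * (ρ * b) ^ 2))) else 1) b with hG
  have hGeq : ∀ b, μA (Prod.mk b ⁻¹' s) = G b := by
    intro b
    by_cases hbv : b < v
    · have hpre : Prod.mk b ⁻¹' s = Set.Ici (ρ * b) := by
        ext a; simp [hs, hbv]
      rw [hpre]
      simp only [hG]
      rw [Set.indicator_of_mem (show b ∈ Set.Iio v from hbv)]
      have hmap : μA (Set.Ici (ρ * b)) = μ {ω | A ω ≥ ρ * b} := by
        rw [hμA, Measure.map_apply hA measurableSet_Ici]; rfl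
      by_cases hb0 : 0 ≤ b
      · rw [if_pos hb0, hmap]
        exact hAge (ρ * b) (by positivity)
      · rw [if_neg hb0, hmap]
        have : {ω | A ω ≥ ρ * b} = Set.univ := Set.eq_univ_of_forall fun ω =>
          le_trans (mul_nonpos_of_nonneg_of_nonpos hρ.le (le_of_not_ge hb0)) (hAnn ω)
        rw [this, measure_univ]
    · have hpre : Prod.mk b ⁻¹' s = ∅ := by
        ext a; simp [hs, hbv]
      rw [hpre, measure_empty]
      simp only [hG]
      rw [Set.indicator_of_notMem (by simpa using hbv)]
  have hE2b : (μB.prod μA) s = ∫⁻ b, G b ∂μB := by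
    rw [Measure.prod_apply hsmeas]
    exact lintegral_congr hGeq
  -- identify μB with a density measure
  set f : ℝ → ENNReal := fun b => Set.indicator (Set.Ici 0)
    (fun b => ENNReal.ofReal (2 * c1 * b * Real.exp (-(c1 * b ^ 2)))) b with hf
  have hfmeas : Measurable f :=
    (ENNReal.measurable_ofReal.comp (by fun_prop)).indicator measurableSet_Ici
  set ν : Measure ℝ := volume.withDensity f with hν
  have hν_Iic : ∀ x : ℝ, ν (Set.Iic x) = μB (Set.Iic x) := by
    intro x
    have hνx : ν (Set.Iic x) = ∫⁻ b in Set.Icc 0 x,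
        ENNReal.ofReal (2 * c1 * b * Real.exp (-(c1 * b ^ 2))) ∂volume := by
      rw [hν, withDensity_apply _ measurableSet_Iic, hf,
        lintegral_indicator measurableSet_Ici, Measure.restrict_restrict measurableSet_Ici,
        Set.Ici_inter_Iic]
    by_cases hx : 0 ≤ x
    · have hint : IntegrableOn (fun b => 2 * c1 * b * Real.exp (-(c1 * b ^ 2)))
          (Set.Icc 0 x) volume := (Continuous.integrableOn_Icc (by fun_prop))
      have hnn : 0 ≤ᵐ[volume.restrict (Set.Icc 0 x)]
          fun b => 2 * c1 * b * Real.exp (-(c1 * b ^ 2)) :=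
        (ae_restrict_iff' measurableSet_Icc).2 (Filter.Eventually.of_forall fun b hb => by
          have := hb.1; positivity)
      rw [hνx, ← ofReal_integral_eq_lintegral_ofReal hint hnn,
        integral_Icc_eq_integral_Ioc, ← intervalIntegral.integral_of_le hx, aux_integral]
      -- μB side
      have : μB (Set.Iic x) = 1 - ENNReal.ofReal (Real.exp (-(c1 * x ^ 2))) := by
        rw [hμB, Measure.map_apply hB measurableSet_Iic]
        have hcomp : B ⁻¹' Set.Iic x = (B ⁻¹' Set.Ioi x)ᶜ := by
          ext ω; simp [not_lt]
        have hBc : μ (B ⁻¹' Set.Ioi x) = ENNReal.ofReal (Real.exp (-(c1 * x ^ 2))) :=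
          hBccdf x hx
        rw [hcomp, measure_compl (hB measurableSet_Ioi) (measure_ne_top _ _), measure_univ, hBc]
      rw [this, ENNReal.ofReal_sub _ (Real.exp_nonneg _), ENNReal.ofReal_one]
    · have h1 : Set.Icc (0:ℝ) x = ∅ := Set.Icc_eq_empty (by linarith)
      have h2 : μB (Set.Iic x) = 0 := by
        rw [hμB, Measure.map_apply hB measurableSet_Iic]
        have : B ⁻¹' Set.Iic x = ∅ :=
          Set.eq_empty_of_forall_notMem fun ω h => absurd (le_trans (hBnn ω) h) (by linarith)
        rw [this, measure_empty]
      rw [hνx, h1, h2]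
      simp
  have hμBν : μB = ν := Measure.ext_of_Iic μB ν fun x => (hν_Iic x).symm
  have hGmeas : Measurable G := by
    apply Measurable.indicator _ measurableSet_Iio
    exact Measurable.ite measurableSet_Ici
      (ENNReal.measurable_ofReal.comp (by fun_prop)) measurable_const
  have hfG : ∀ b, (f * G) b = Set.indicator (Set.Ico 0 v)
      (fun b => ENNReal.ofReal (2 * c1 * b * Real.exp (-(c2 * b ^ 2)))) b := by
    intro b
    simp only [Pi.mul_apply, hf, hG]
    by_cases hb0 : 0 ≤ b
    · by_cases hbv : b < v
      · rw [Set.indicator_of_mem (show b ∈ Set.Ico 0 v from ⟨hb0, hbv⟩),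
          Set.indicator_of_mem (show b ∈ Set.Ici (0:ℝ) from hb0),
          Set.indicator_of_mem (show b ∈ Set.Iio v from hbv), if_pos hb0,
          ← ENNReal.ofReal_mul (by positivity)]
        congr 1
        have hexp : Real.exp (-(c1 * b ^ 2)) * Real.exp (-(c1 * (ρ * b) ^ 2))
            = Real.exp (-(c2 * b ^ 2)) := by
          rw [← Real.exp_add]
          congr 1
          rw [hc2def]
          ring
        calc 2 * c1 * b * Real.exp (-(c1 * b ^ 2)) * Real.exp (-(c1 * (ρ * b) ^ 2))
            = 2 * c1 * b * (Real.exp (-(c1 * b ^ 2)) * Real.exp (-(c1 * (ρ * b) ^ 2))) := by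
              ring
          _ = 2 * c1 * b * Real.exp (-(c2 * b ^ 2)) := by rw [hexp]
      · rw [Set.indicator_of_notMem (fun h => hbv (Set.mem_Ico.1 h).2),
          Set.indicator_of_notMem (show b ∉ Set.Iio v from hbv), mul_zero]
    · rw [Set.indicator_of_notMem (fun h => hb0 (Set.mem_Ico.1 h).1),
        Set.indicator_of_notMem (show b ∉ Set.Ici (0:ℝ) from hb0), zero_mul]
  have hE2 : μ {ω | A ω ≥ ρ * B ω ∧ B ω < v} =
      ENNReal.ofReal ((1 / (ρ ^ 2 + 1)) * (1 - Real.exp (-(c2 * v ^ 2)))) := by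
    rw [hE2a, hE2b, hμBν, hν, lintegral_withDensity_eq_lintegral_mul volume hfmeas hGmeas,
      lintegral_congr hfG, lintegral_indicator measurableSet_Ico]
    have hint : IntegrableOn (fun b => 2 * c1 * b * Real.exp (-(c2 * b ^ 2)))
        (Set.Ico 0 v) volume :=
      (Continuous.integrableOn_Icc (by fun_prop)).mono_set Set.Ico_subset_Icc_self
    have hnn : 0 ≤ᵐ[volume.restrict (Set.Ico 0 v)]
        fun b => 2 * c1 * b * Real.exp (-(c2 * b ^ 2)) :=
      (ae_restrict_iff' measurableSet_Ico).2 (Filter.Eventually.of_forall fun b hb => by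
        have := hb.1; positivity)
    rw [← ofReal_integral_eq_lintegral_ofReal hint hnn]
    congr 1
    rw [MeasureTheory.integral_Ico_eq_integral_Ioo, ← MeasureTheory.integral_Ioc_eq_integral_Ioo,
      ← intervalIntegral.integral_of_le hv.le]
    have hcong : Set.EqOn (fun b => 2 * c1 * b * Real.exp (-(c2 * b ^ 2)))
        (fun b => (c1 / c2) * (2 * c2 * b * Real.exp (-(c2 * b ^ 2)))) (Set.uIcc 0 v) := by
      intro b _
      field_simp
    rw [intervalIntegral.integral_congr hcong, intervalIntegral.integral_const_mul,
      aux_integral]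
    have : c1 / c2 = 1 / (ρ ^ 2 + 1) := by
      rw [hc2def]
      field_simp
    rw [this]
  -- assemble
  have hle : Real.exp (-(c2 * v ^ 2)) ≤ 1 := Real.exp_le_one_iff.2 (neg_nonpos.2 (by positivity))
  have h0 : 0 ≤ 1 - Real.exp (-(c2 * v ^ 2)) := by linarith
  rw [hsplit, hE1, hE2, ← ENNReal.ofReal_add (Real.exp_nonneg _) (by positivity)]
  congr 1
  have harg : c2 * v ^ 2 = (ρ ^ 2 + 1) * lam * π * v ^ 2 := by rw [hc2def, hc1def]; ring
  rw [harg]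
  field_simp
  ring

/-- Under the DOWJ attack with `u ≥ ρv`, the jamming probability is
`P((A ≥ ρv, B ≥ v) or (A ≥ ρB, B < v)) = 1/(ρ²+1) + (ρ²/(ρ²+1)) e^{−(ρ²+1)λπv²}`. -/
theorem stmt4 {Ω : Type*} [MeasurableSpace Ω] (μ : Measure Ω) [IsProbabilityMeasure μ]
    (lam ρ : ℝ) (hlam : 0 < lam) (hρ : 0 < ρ)
    (A B : Ω → ℝ) (hA : Measurable A) (hB : Measurable B)
    (hAnn : ∀ ω, 0 ≤ A ω) (hBnn : ∀ ω, 0 ≤ B ω)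
    (hindep : IndepFun A B μ)
    (hAccdf : ∀ r : ℝ, 0 ≤ r → μ {ω | A ω > r} = ENNReal.ofReal (Real.exp (-(lam * π * r ^ 2))))
    (hBccdf : ∀ r : ℝ, 0 ≤ r → μ {ω | B ω > r} = ENNReal.ofReal (Real.exp (-(lam * π * r ^ 2))))
    (v : ℝ) (hv : 0 < v) :
    μ {ω | (A ω ≥ ρ * v ∧ B ω ≥ v) ∨ (A ω ≥ ρ * B ω ∧ B ω < v)} =
      ENNReal.ofReal (1 / (ρ ^ 2 + 1)
        + (ρ ^ 2 / (ρ ^ 2 + 1)) * Real.exp (-((ρ ^ 2 + 1) * lam * π * v ^ 2))) :=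
  stmt4_aux μ lam ρ hlam hρ A B hA hB hAnn hBnn hindep hAccdf hBccdf v hv
end

section
/- Let λ, β > 0, 0 < α_L < α_N, and let Λ(λ, w) = λπ w^{2/α_N} − (2πλ/β²)(1 + β w^{1/α_L}) e^{−β w^{1/α_L}} + (2πλ/β²)(1 + β w^{1/α_N}) e^{−β w^{1/α_N}}, with derivative Λ′(λ, w) = (2πλ/α_N) w^{2/α_N − 1}(1 − e^{−β w^{1/α_N}}) + (2πλ/α_L) w^{2/α_L − 1} e^{−β w^{1/α_L}}. Let L_T and L_R be independent nonnegative random variables with P(L_T > w) = P(L_R > w) = e^{−Λ(λ, w)} for all w ≥ 0, and let ρ > 0. Then for every q > 0, P( (L_T ≥ ρq and L_R ≥ q) or (L_T ≥ ρ L_R and L_R < q) ) = 1 − ρ ∫₀^{q} e^{−(Λ(λ, ρw) + Λ(λ, w))} Λ′(λ, ρw) dw. (This is the second case of ζ_κ^τ(u, v) in Lemma 4, with q = v^{α_τ}.) -/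
open MeasureTheory Real ProbabilityTheory intervalIntegral

/-- The exponent `Λ(λ, w)` of the CCDF of the smallest path loss to a PPP. -/
noncomputable def Lam (β αL αN lam w : ℝ) : ℝ :=
  lam * π * w ^ (2 / αN)
    - (2 * π * lam / β ^ 2) * (1 + β * w ^ (1 / αL)) * Real.exp (-(β * w ^ (1 / αL)))
    + (2 * π * lam / β ^ 2) * (1 + β * w ^ (1 / αN)) * Real.exp (-(β * w ^ (1 / αN)))

/-- Its derivative `Λ′(λ, w)` in `w`. -/
noncomputable def Lam' (β αL αN lam w : ℝ) : ℝ :=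
  (2 * π * lam / αN) * w ^ (2 / αN - 1) * (1 - Real.exp (-(β * w ^ (1 / αN))))
    + (2 * π * lam / αL) * w ^ (2 / αL - 1) * Real.exp (-(β * w ^ (1 / αL)))

lemma stmt9_aux_deriv (C β : ℝ) (hβ : β ≠ 0) {α : ℝ} (hα : 0 < α) {w : ℝ} (hw : 0 < w) :
    HasDerivAt (fun w : ℝ => C * (1 + β * w ^ (1/α)) * Real.exp (-(β * w ^ (1/α))))
      (-(C * β^2 / α) * w ^ (2/α - 1) * Real.exp (-(β * w ^ (1/α)))) w := by
  have hu : HasDerivAt (fun w : ℝ => w ^ (1/α)) ((1/α) * w^(1/α - 1)) w :=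
    Real.hasDerivAt_rpow_const (Or.inl hw.ne')
  have h1 : HasDerivAt (fun w : ℝ => C * (1 + β * w ^ (1/α))) (C * (β * ((1/α) * w^(1/α-1)))) w :=
    (((hu.const_mul β).const_add 1).const_mul C)
  have h2 : HasDerivAt (fun w : ℝ => Real.exp (-(β * w ^ (1/α))))
      (Real.exp (-(β * w^(1/α))) * (-(β * ((1/α)*w^(1/α-1))))) w :=
    ((hu.const_mul β).neg).exp
  have h3 := h1.mul h2
  refine h3.congr_deriv ?_
  have key : w ^ (1/α) * w ^ (1/α - 1) = w ^ (2/α - 1) := by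
    rw [← Real.rpow_add hw]; ring_nf
  rw [← key]
  field_simp
  ring

lemma stmt9_lam_hasDerivAt {β αL αN lam : ℝ} (hβ : 0 < β) (hαL : 0 < αL) (hαN : 0 < αN)
    {w : ℝ} (hw : 0 < w) :
    HasDerivAt (Lam β αL αN lam) (Lam' β αL αN lam w) w := by
  have h0 : HasDerivAt (fun w : ℝ => lam * π * w ^ (2/αN))
      (lam * π * ((2/αN) * w^(2/αN-1))) w :=
    (Real.hasDerivAt_rpow_const (Or.inl hw.ne')).const_mul _
  have hL := stmt9_aux_deriv (2 * π * lam / β^2) β hβ.ne' hαL hw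
  have hN := stmt9_aux_deriv (2 * π * lam / β^2) β hβ.ne' hαN hw
  have h := (h0.sub hL).add hN
  have hfun : (fun w : ℝ => lam * π * w ^ (2 / αN)
      - (2 * π * lam / β ^ 2) * (1 + β * w ^ (1 / αL)) * Real.exp (-(β * w ^ (1 / αL)))
      + (2 * π * lam / β ^ 2) * (1 + β * w ^ (1 / αN)) * Real.exp (-(β * w ^ (1 / αN))))
      = Lam β αL αN lam := rfl
  replace h : HasDerivAt (Lam β αL αN lam) _ w := h
  convert h using 1
  simp only [Lam']
  field_simp
  ring

lemma stmt9_rpow_cont {c : ℝ} (hc : 0 < c) : Continuous (fun w : ℝ => w ^ c) :=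
  continuous_iff_continuousAt.mpr fun x => Real.continuousAt_rpow_const _ _ (Or.inr hc.le)

lemma stmt9_lam_continuous {β αL αN lam : ℝ} (hαL : 0 < αL) (hαN : 0 < αN) :
    Continuous (Lam β αL αN lam) := by
  have h1 := stmt9_rpow_cont (show (0:ℝ) < 2/αN by positivity)
  have h2 := stmt9_rpow_cont (show (0:ℝ) < 1/αL by positivity)
  have h3 := stmt9_rpow_cont (show (0:ℝ) < 1/αN by positivity)
  unfold Lam
  fun_prop

lemma stmt9_lam_zero {β αL αN lam : ℝ} (hαL : 0 < αL) (hαN : 0 < αN) :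
    Lam β αL αN lam 0 = 0 := by
  unfold Lam
  rw [Real.zero_rpow (by positivity : (2/αN : ℝ) ≠ 0),
    Real.zero_rpow (by positivity : (1/αL : ℝ) ≠ 0),
    Real.zero_rpow (by positivity : (1/αN : ℝ) ≠ 0)]
  simp

lemma stmt9_lam'_nonneg {β αL αN lam : ℝ} (hlam : 0 ≤ lam) (hβ : 0 ≤ β)
    (hαL : 0 < αL) (hαN : 0 < αN) {w : ℝ} (hw : 0 ≤ w) :
    0 ≤ Lam' β αL αN lam w := by
  unfold Lam'
  have e1 : Real.exp (-(β * w ^ (1/αN))) ≤ 1 :=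
    Real.exp_le_one_iff.mpr (neg_nonpos.mpr (by positivity))
  have : (0:ℝ) ≤ 1 - Real.exp (-(β * w ^ (1/αN))) := by linarith
  positivity

lemma stmt9_lam'_le {β αL αN lam : ℝ} (hlam : 0 ≤ lam) (hβ : 0 ≤ β)
    (hαL : 0 < αL) (hαN : 0 < αN) {w : ℝ} (hw : 0 ≤ w) :
    Lam' β αL αN lam w ≤ (2 * π * lam / αN) * w ^ (2/αN - 1)
      + (2 * π * lam / αL) * w ^ (2/αL - 1) := by
  unfold Lam'
  have e1 : Real.exp (-(β * w ^ (1/αN))) ≤ 1 := Real.exp_le_one_iff.mpr (neg_nonpos.mpr (by positivity))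
  have e2 : Real.exp (-(β * w ^ (1/αL))) ≤ 1 := Real.exp_le_one_iff.mpr (neg_nonpos.mpr (by positivity))
  have e3 : (0:ℝ) < Real.exp (-(β * w ^ (1/αN))) := Real.exp_pos _
  have p1 : (0:ℝ) ≤ (2 * π * lam / αN) * w ^ (2/αN - 1) := by positivity
  have p2 : (0:ℝ) ≤ (2 * π * lam / αL) * w ^ (2/αL - 1) := by positivity
  have := mul_le_of_le_one_right p1 (by linarith : 1 - Real.exp (-(β * w ^ (1/αN))) ≤ 1)
  have := mul_le_of_le_one_right p2 e2
  linarith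

lemma stmt9_lam'_measurable {β αL αN lam : ℝ} : Measurable (Lam' β αL αN lam) := by
  unfold Lam'
  measurability

lemma stmt9_II {F : ℝ → ℝ} {q K1 K2 r1 r2 : ℝ} (hq : 0 ≤ q) (hr1 : -1 < r1) (hr2 : -1 < r2)
    (hK1 : 0 ≤ K1) (hK2 : 0 ≤ K2) (hmeas : Measurable F)
    (hF : ∀ w ∈ Set.Ioc (0:ℝ) q, |F w| ≤ K1 * w ^ r1 + K2 * w ^ r2) :
    IntervalIntegrable F volume 0 q := by
  have hg : IntervalIntegrable (fun w : ℝ => K1 * w ^ r1 + K2 * w ^ r2) volume 0 q :=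
    ((intervalIntegrable_rpow' hr1).const_mul K1).add
      ((intervalIntegrable_rpow' hr2).const_mul K2)
  refine hg.mono_fun hmeas.aestronglyMeasurable ?_
  rw [Set.uIoc_of_le hq]
  refine (ae_restrict_iff' measurableSet_Ioc).mpr (ae_of_all _ fun w hw => ?_)
  have h1 := hF w hw
  have h2 : K1 * w ^ r1 + K2 * w ^ r2 ≤ ‖K1 * w ^ r1 + K2 * w ^ r2‖ := le_abs_self _
  calc ‖F w‖ = |F w| := rfl
    _ ≤ K1 * w ^ r1 + K2 * w ^ r2 := h1
    _ ≤ ‖K1 * w ^ r1 + K2 * w ^ r2‖ := h2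

lemma stmt9_II_lam' {β αL αN lam : ℝ} (hlam : 0 ≤ lam) (hβ : 0 ≤ β)
    (hαL : 0 < αL) (hαN : 0 < αN) {s : ℝ} (hs : 0 < s) {q : ℝ} (hq : 0 ≤ q)
    {F : ℝ → ℝ} (hmeas : Measurable F)
    (hF : ∀ w ∈ Set.Ioc (0:ℝ) q, |F w| ≤ Lam' β αL αN lam (s * w)) :
    IntervalIntegrable F volume 0 q := by
  refine stmt9_II (K1 := (2 * π * lam / αN) * s ^ (2/αN - 1))
    (K2 := (2 * π * lam / αL) * s ^ (2/αL - 1))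
    (r1 := 2/αN - 1) (r2 := 2/αL - 1) hq (by have := div_pos two_pos hαN; linarith)
    (by have := div_pos two_pos hαL; linarith) (by positivity) (by positivity) hmeas ?_
  intro w hw
  refine (hF w hw).trans ?_
  have h := stmt9_lam'_le (w := s * w) hlam hβ hαL hαN (mul_nonneg hs.le hw.1.le)
  calc Lam' β αL αN lam (s * w)
      ≤ (2 * π * lam / αN) * (s*w) ^ (2/αN - 1) + (2 * π * lam / αL) * (s*w) ^ (2/αL - 1) := h
    _ = (2 * π * lam / αN) * s ^ (2/αN - 1) * w ^ (2/αN - 1)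
        + (2 * π * lam / αL) * s ^ (2/αL - 1) * w ^ (2/αL - 1) := by
        rw [Real.mul_rpow hs.le hw.1.le, Real.mul_rpow hs.le hw.1.le]; ring

lemma stmt9_deriv_pair {β αL αN lam ρ : ℝ} (hβ : 0 < β) (hαL : 0 < αL) (hαN : 0 < αN)
    (hρ : 0 < ρ) {x : ℝ} (hx : 0 < x) :
    HasDerivAt (fun w : ℝ => -(Real.exp (-(Lam β αL αN lam (ρ*w) + Lam β αL αN lam w))))
      (Real.exp (-(Lam β αL αN lam (ρ*x) + Lam β αL αN lam x))
        * (ρ * Lam' β αL αN lam (ρ*x) + Lam' β αL αN lam x)) x := by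
  have hin : HasDerivAt (fun w : ℝ => ρ * w) ρ x := by
    simpa using (hasDerivAt_id x).const_mul ρ
  have hA : HasDerivAt (fun w : ℝ => Lam β αL αN lam (ρ*w))
      (Lam' β αL αN lam (ρ*x) * ρ) x :=
    (stmt9_lam_hasDerivAt hβ hαL hαN (by positivity)).comp x hin
  have hB : HasDerivAt (Lam β αL αN lam) (Lam' β αL αN lam x) x :=
    stmt9_lam_hasDerivAt hβ hαL hαN hx
  have h := (((hA.add hB).neg).exp).neg
  refine h.congr_deriv ?_
  simp only [Pi.neg_apply, Pi.add_apply]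
  ring

lemma stmt9_FTC {β αL αN lam ρ : ℝ} (hlam : 0 < lam) (hβ : 0 < β)
    (hαL : 0 < αL) (hαN : 0 < αN) (hρ : 0 < ρ)
    (hΛ : ∀ w, 0 ≤ w → 0 ≤ Lam β αL αN lam w) {q : ℝ} (hq : 0 ≤ q) :
    ∫ w in (0:ℝ)..q, Real.exp (-(Lam β αL αN lam (ρ*w) + Lam β αL αN lam w))
        * (ρ * Lam' β αL αN lam (ρ*w) + Lam' β αL αN lam w)
      = 1 - Real.exp (-(Lam β αL αN lam (ρ*q) + Lam β αL αN lam q)) := by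
  have hcontL : Continuous (Lam β αL αN lam) := stmt9_lam_continuous hαL hαN
  have hcont : ContinuousOn (fun w : ℝ => -(Real.exp (-(Lam β αL αN lam (ρ*w) + Lam β αL αN lam w))))
      (Set.Icc 0 q) :=
    (((((hcontL.comp (continuous_const.mul continuous_id)).add hcontL).neg).rexp).neg).continuousOn
  have hexp_le : ∀ w : ℝ, 0 ≤ w →
      Real.exp (-(Lam β αL αN lam (ρ*w) + Lam β αL αN lam w)) ≤ 1 := fun w hw =>
    Real.exp_le_one_iff.mpr (neg_nonpos.mpr (add_nonneg (hΛ _ (by positivity)) (hΛ _ hw)))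
  -- integrability of the two pieces
  have hm1 : Measurable fun w : ℝ =>
      Real.exp (-(Lam β αL αN lam (ρ*w) + Lam β αL αN lam w)) * (ρ * Lam' β αL αN lam (ρ*w)) :=
    ((((hcontL.comp (continuous_const.mul continuous_id)).add hcontL).neg.rexp).measurable).mul
      ((stmt9_lam'_measurable.comp (measurable_const_mul ρ)).const_mul ρ)
  have hm2 : Measurable fun w : ℝ =>
      Real.exp (-(Lam β αL αN lam (ρ*w) + Lam β αL αN lam w)) * Lam' β αL αN lam w :=
    ((((hcontL.comp (continuous_const.mul continuous_id)).add hcontL).neg.rexp).measurable).mul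
      stmt9_lam'_measurable
  have hii1 : IntervalIntegrable (fun w : ℝ =>
      Real.exp (-(Lam β αL αN lam (ρ*w) + Lam β αL αN lam w)) * (ρ * Lam' β αL αN lam (ρ*w)))
      volume 0 q := by
    refine stmt9_II_lam' (lam := ρ * lam) (by positivity) hβ.le hαL hαN hρ hq hm1 ?_
    intro w hw
    have hnn : 0 ≤ Real.exp (-(Lam β αL αN lam (ρ*w) + Lam β αL αN lam w))
        * (ρ * Lam' β αL αN lam (ρ*w)) := by
      have := stmt9_lam'_nonneg (w := ρ*w) hlam.le hβ.le hαL hαN (mul_nonneg hρ.le hw.1.le)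
      positivity
    rw [abs_of_nonneg hnn]
    have hle : Real.exp (-(Lam β αL αN lam (ρ*w) + Lam β αL αN lam w))
        * (ρ * Lam' β αL αN lam (ρ*w)) ≤ 1 * (ρ * Lam' β αL αN lam (ρ*w)) := by
      refine mul_le_mul_of_nonneg_right (hexp_le w hw.1.le) ?_
      have := stmt9_lam'_nonneg (w := ρ*w) hlam.le hβ.le hαL hαN (mul_nonneg hρ.le hw.1.le)
      positivity
    refine hle.trans (le_of_eq ?_)
    unfold Lam'
    ring
  have hii2 : IntervalIntegrable (fun w : ℝ =>
      Real.exp (-(Lam β αL αN lam (ρ*w) + Lam β αL αN lam w)) * Lam' β αL αN lam w)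
      volume 0 q := by
    refine stmt9_II_lam' (lam := lam) (s := 1) hlam.le hβ.le hαL hαN one_pos hq hm2 ?_
    intro w hw
    rw [one_mul]
    have hnn' := stmt9_lam'_nonneg (w := w) hlam.le hβ.le hαL hαN hw.1.le
    have hnn : 0 ≤ Real.exp (-(Lam β αL αN lam (ρ*w) + Lam β αL αN lam w))
        * Lam' β αL αN lam w := by positivity
    rw [abs_of_nonneg hnn]
    calc Real.exp (-(Lam β αL αN lam (ρ*w) + Lam β αL αN lam w)) * Lam' β αL αN lam w
        ≤ 1 * Lam' β αL αN lam w := mul_le_mul_of_nonneg_right (hexp_le w hw.1.le) hnn'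
      _ = Lam' β αL αN lam w := one_mul _
  have hint : IntervalIntegrable (fun w : ℝ =>
      Real.exp (-(Lam β αL αN lam (ρ*w) + Lam β αL αN lam w))
        * (ρ * Lam' β αL αN lam (ρ*w) + Lam' β αL αN lam w)) volume 0 q := by
    simpa only [mul_add] using hii1.add hii2
  have key := integral_eq_sub_of_hasDeriv_right_of_le hq hcont
    (fun x hx => (stmt9_deriv_pair hβ hαL hαN hρ hx.1).hasDerivWithinAt) hint
  rw [key, mul_zero, stmt9_lam_zero hαL hαN]
  norm_num
  ring

lemma stmt9_ii_f {β αL αN lam : ℝ} (hlam : 0 < lam) (hβ : 0 < β)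
    (hαL : 0 < αL) (hαN : 0 < αN)
    (hΛ : ∀ w, 0 ≤ w → 0 ≤ Lam β αL αN lam w) {q : ℝ} (hq : 0 ≤ q) :
    IntervalIntegrable (fun w : ℝ => Lam' β αL αN lam w * Real.exp (-(Lam β αL αN lam w)))
      volume 0 q := by
  have hcontL : Continuous (Lam β αL αN lam) := stmt9_lam_continuous hαL hαN
  have hm : Measurable fun w : ℝ => Lam' β αL αN lam w * Real.exp (-(Lam β αL αN lam w)) :=
    stmt9_lam'_measurable.mul (hcontL.neg.rexp).measurable
  refine stmt9_II_lam' (lam := lam) (s := 1) hlam.le hβ.le hαL hαN one_pos hq hm ?_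
  intro w hw
  rw [one_mul]
  have hnn' := stmt9_lam'_nonneg (w := w) hlam.le hβ.le hαL hαN hw.1.le
  have hnn : 0 ≤ Lam' β αL αN lam w * Real.exp (-(Lam β αL αN lam w)) := by positivity
  rw [abs_of_nonneg hnn]
  have he : Real.exp (-(Lam β αL αN lam w)) ≤ 1 :=
    Real.exp_le_one_iff.mpr (neg_nonpos.mpr (hΛ w hw.1.le))
  calc Lam' β αL αN lam w * Real.exp (-(Lam β αL αN lam w))
      ≤ Lam' β αL αN lam w * 1 := mul_le_mul_of_nonneg_left he hnn'
    _ = Lam' β αL αN lam w := mul_one _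

lemma stmt9_FTC2 {β αL αN lam : ℝ} (hlam : 0 < lam) (hβ : 0 < β)
    (hαL : 0 < αL) (hαN : 0 < αN)
    (hΛ : ∀ w, 0 ≤ w → 0 ≤ Lam β αL αN lam w) {x y : ℝ} (hx : 0 ≤ x) (hxy : x ≤ y) :
    ∫ w in x..y, Lam' β αL αN lam w * Real.exp (-(Lam β αL αN lam w))
      = Real.exp (-(Lam β αL αN lam x)) - Real.exp (-(Lam β αL αN lam y)) := by
  have hcontL : Continuous (Lam β αL αN lam) := stmt9_lam_continuous hαL hαN
  have hint : IntervalIntegrable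
      (fun w : ℝ => Lam' β αL αN lam w * Real.exp (-(Lam β αL αN lam w))) volume x y :=
    (stmt9_ii_f hlam hβ hαL hαN hΛ (hx.trans hxy)).mono_set
      (Set.uIcc_subset_uIcc_iff_le.mpr
        ⟨by rw [min_eq_left hxy, min_eq_left (hx.trans hxy)]; exact hx,
         by rw [max_eq_right hxy, max_eq_right (hx.trans hxy)]⟩)
  have hcont : ContinuousOn (fun w : ℝ => -(Real.exp (-(Lam β αL αN lam w)))) (Set.Icc x y) :=
    (hcontL.neg.rexp.neg).continuousOn
  have key := integral_eq_sub_of_hasDeriv_right_of_le hxy hcont (f' := fun w =>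
      Lam' β αL αN lam w * Real.exp (-(Lam β αL αN lam w)))
    (fun z hz => by
      have hB : HasDerivAt (Lam β αL αN lam) (Lam' β αL αN lam z) z :=
        stmt9_lam_hasDerivAt hβ hαL hαN (hx.trans_lt hz.1)
      have h := (hB.neg.exp).neg
      have : HasDerivAt (fun w : ℝ => -(Real.exp (-(Lam β αL αN lam w))))
          (Lam' β αL αN lam z * Real.exp (-(Lam β αL αN lam z))) z := by
        refine h.congr_deriv ?_; simp only [Pi.neg_apply]; ring
      exact this.hasDerivWithinAt) hint
  rw [key]
  ring

lemma stmt9_Ici (ν : Measure ℝ) [IsProbabilityMeasure ν] (Gb : ℝ → ℝ) (hGb : Continuous Gb)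
    (h : ∀ a, ν (Set.Ioi a) = ENNReal.ofReal (Gb a)) (a : ℝ) :
    ν (Set.Ici a) = ENNReal.ofReal (Gb a) := by
  have hset : Set.Ici a = ⋂ n : ℕ, Set.Ioi (a - ((n:ℝ)+1)⁻¹) := by
    ext x
    simp only [Set.mem_Ici, Set.mem_iInter, Set.mem_Ioi]
    constructor
    · intro hx n
      have : (0:ℝ) < ((n:ℝ)+1)⁻¹ := by positivity
      linarith
    · intro hx
      by_contra hlt
      push_neg at hlt
      obtain ⟨n, hn⟩ := exists_nat_one_div_lt (show (0:ℝ) < a - x by linarith)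
      have := hx n
      rw [one_div] at hn
      linarith
  have hanti : Antitone (fun n : ℕ => Set.Ioi (a - ((n:ℝ)+1)⁻¹)) := by
    intro m n hmn
    refine Set.Ioi_subset_Ioi ?_
    have h1 : ((m:ℝ)+1)⁻¹ ≥ ((n:ℝ)+1)⁻¹ := by
      gcongr <;> exact_mod_cast hmn
    linarith
  have htend := tendsto_measure_iInter_atTop (μ := ν)
    (fun n : ℕ => measurableSet_Ioi.nullMeasurableSet) hanti ⟨0, measure_ne_top _ _⟩
  rw [← hset] at htend
  have h2 : Filter.Tendsto (fun n : ℕ => a - ((n:ℝ)+1)⁻¹) Filter.atTop (nhds a) := by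
    have h3 : Filter.Tendsto (fun n : ℕ => ((n:ℝ)+1)⁻¹) Filter.atTop (nhds 0) := by
      simpa [one_div] using tendsto_one_div_add_atTop_nhds_zero_nat (𝕜 := ℝ)
    simpa using (h3.const_sub a)
  have h4 : Filter.Tendsto (⇑ν ∘ fun n : ℕ => Set.Ioi (a - ((n:ℝ)+1)⁻¹)) Filter.atTop
      (nhds (ENNReal.ofReal (Gb a))) := by
    have : (⇑ν ∘ fun n : ℕ => Set.Ioi (a - ((n:ℝ)+1)⁻¹))
        = fun n : ℕ => ENNReal.ofReal (Gb (a - ((n:ℝ)+1)⁻¹)) := by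
      funext n; exact h _
    rw [this]
    exact (ENNReal.continuous_ofReal.tendsto _).comp ((hGb.tendsto a).comp h2)
  exact tendsto_nhds_unique htend h4

lemma stmt9_atom (ν : Measure ℝ) [IsProbabilityMeasure ν] (Gb : ℝ → ℝ) (hGb : Continuous Gb)
    (h : ∀ a, ν (Set.Ioi a) = ENNReal.ofReal (Gb a)) (a : ℝ) :
    ν {a} = 0 := by
  have h1 : ν {a} = ν (Set.Ici a) - ν (Set.Ioi a) := by
    rw [← Set.Ici_sdiff_Ioi_same]
    exact measure_diff Set.Ioi_subset_Ici_self measurableSet_Ioi.nullMeasurableSet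
      (measure_ne_top _ _)
  rw [h1, stmt9_Ici ν Gb hGb h a, h a, tsub_self]

lemma stmt9_ii_h1 {β αL αN lam ρ : ℝ} (hlam : 0 < lam) (hβ : 0 < β)
    (hαL : 0 < αL) (hαN : 0 < αN) (hρ : 0 < ρ)
    (hΛ : ∀ w, 0 ≤ w → 0 ≤ Lam β αL αN lam w) {q : ℝ} (hq : 0 ≤ q) :
    IntervalIntegrable (fun w : ℝ =>
      Real.exp (-(Lam β αL αN lam (ρ*w) + Lam β αL αN lam w)) * Lam' β αL αN lam (ρ*w))
      volume 0 q := by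
  have hcontL : Continuous (Lam β αL αN lam) := stmt9_lam_continuous hαL hαN
  have hm : Measurable fun w : ℝ =>
      Real.exp (-(Lam β αL αN lam (ρ*w) + Lam β αL αN lam w)) * Lam' β αL αN lam (ρ*w) :=
    ((((hcontL.comp (continuous_const.mul continuous_id)).add hcontL).neg.rexp).measurable).mul
      (stmt9_lam'_measurable.comp (measurable_const_mul ρ))
  refine stmt9_II_lam' hlam.le hβ.le hαL hαN hρ hq hm ?_
  intro w hw
  have hnn' := stmt9_lam'_nonneg (w := ρ*w) hlam.le hβ.le hαL hαN (mul_nonneg hρ.le hw.1.le)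
  have hnn : 0 ≤ Real.exp (-(Lam β αL αN lam (ρ*w) + Lam β αL αN lam w))
      * Lam' β αL αN lam (ρ*w) := by positivity
  rw [abs_of_nonneg hnn]
  have he : Real.exp (-(Lam β αL αN lam (ρ*w) + Lam β αL αN lam w)) ≤ 1 :=
    Real.exp_le_one_iff.mpr (neg_nonpos.mpr
      (add_nonneg (hΛ _ (mul_nonneg hρ.le hw.1.le)) (hΛ _ hw.1.le)))
  calc Real.exp (-(Lam β αL αN lam (ρ*w) + Lam β αL αN lam w)) * Lam' β αL αN lam (ρ*w)
      ≤ 1 * Lam' β αL αN lam (ρ*w) := mul_le_mul_of_nonneg_right he hnn'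
    _ = Lam' β αL αN lam (ρ*w) := one_mul _

lemma stmt9_ii_h2 {β αL αN lam ρ : ℝ} (hlam : 0 < lam) (hβ : 0 < β)
    (hαL : 0 < αL) (hαN : 0 < αN) (hρ : 0 < ρ)
    (hΛ : ∀ w, 0 ≤ w → 0 ≤ Lam β αL αN lam w) {q : ℝ} (hq : 0 ≤ q) :
    IntervalIntegrable (fun w : ℝ =>
      Real.exp (-(Lam β αL αN lam (ρ*w) + Lam β αL αN lam w)) * Lam' β αL αN lam w)
      volume 0 q := by
  have hcontL : Continuous (Lam β αL αN lam) := stmt9_lam_continuous hαL hαN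
  have hm : Measurable fun w : ℝ =>
      Real.exp (-(Lam β αL αN lam (ρ*w) + Lam β αL αN lam w)) * Lam' β αL αN lam w :=
    ((((hcontL.comp (continuous_const.mul continuous_id)).add hcontL).neg.rexp).measurable).mul
      stmt9_lam'_measurable
  refine stmt9_II_lam' (s := 1) hlam.le hβ.le hαL hαN one_pos hq hm ?_
  intro w hw
  rw [one_mul]
  have hnn' := stmt9_lam'_nonneg (w := w) hlam.le hβ.le hαL hαN hw.1.le
  have hnn : 0 ≤ Real.exp (-(Lam β αL αN lam (ρ*w) + Lam β αL αN lam w))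
      * Lam' β αL αN lam w := by positivity
  rw [abs_of_nonneg hnn]
  have he : Real.exp (-(Lam β αL αN lam (ρ*w) + Lam β αL αN lam w)) ≤ 1 :=
    Real.exp_le_one_iff.mpr (neg_nonpos.mpr
      (add_nonneg (hΛ _ (mul_nonneg hρ.le hw.1.le)) (hΛ _ hw.1.le)))
  calc Real.exp (-(Lam β αL αN lam (ρ*w) + Lam β αL αN lam w)) * Lam' β αL αN lam w
      ≤ 1 * Lam' β αL αN lam w := mul_le_mul_of_nonneg_right he hnn'
    _ = Lam' β αL αN lam w := one_mul _

lemma stmt9_ii_h3 {β αL αN lam ρ : ℝ} (hlam : 0 < lam) (hβ : 0 < β)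
    (hαL : 0 < αL) (hαN : 0 < αN) (hρ : 0 < ρ)
    (hΛ : ∀ w, 0 ≤ w → 0 ≤ Lam β αL αN lam w) {q : ℝ} (hq : 0 ≤ q) :
    IntervalIntegrable (fun w : ℝ =>
      Lam' β αL αN lam w * Real.exp (-(Lam β αL αN lam w)) * Real.exp (-(Lam β αL αN lam (ρ*w))))
      volume 0 q := by
  have h : (fun w : ℝ =>
      Lam' β αL αN lam w * Real.exp (-(Lam β αL αN lam w)) * Real.exp (-(Lam β αL αN lam (ρ*w))))
      = fun w : ℝ => Real.exp (-(Lam β αL αN lam (ρ*w) + Lam β αL αN lam w)) * Lam' β αL αN lam w := by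
    funext w
    rw [neg_add, Real.exp_add]
    ring
  rw [h]
  exact stmt9_ii_h2 hlam hβ hαL hαN hρ hΛ hq

/-- Under the LOWJ attack (second case of `ζ_κ^τ(u,v)` in Lemma 4),
`P((L_T ≥ ρq, L_R ≥ q) or (L_T ≥ ρL_R, L_R < q)) = 1 − ρ∫₀^q e^{−(Λ(λ,ρw)+Λ(λ,w))} Λ′(λ,ρw) dw`. -/
theorem stmt9 {Ω : Type*} [MeasurableSpace Ω] (μ : Measure Ω) [IsProbabilityMeasure μ]
    (lam β αL αN ρ : ℝ) (hlam : 0 < lam) (hβ : 0 < β)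
    (hαL : 0 < αL) (hLN : αL < αN) (hρ : 0 < ρ)
    (LT LR : Ω → ℝ) (hLT : Measurable LT) (hLR : Measurable LR)
    (hLTnn : ∀ ω, 0 ≤ LT ω) (hLRnn : ∀ ω, 0 ≤ LR ω)
    (hindep : IndepFun LT LR μ)
    (hLTccdf : ∀ w : ℝ, 0 ≤ w →
      μ {ω | LT ω > w} = ENNReal.ofReal (Real.exp (-Lam β αL αN lam w)))
    (hLRccdf : ∀ w : ℝ, 0 ≤ w →
      μ {ω | LR ω > w} = ENNReal.ofReal (Real.exp (-Lam β αL αN lam w)))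
    (q : ℝ) (hq : 0 < q) :
    μ {ω | (LT ω ≥ ρ * q ∧ LR ω ≥ q) ∨ (LT ω ≥ ρ * LR ω ∧ LR ω < q)} =
      ENNReal.ofReal (1 - ρ * ∫ w in (0:ℝ)..q,
        Real.exp (-(Lam β αL αN lam (ρ * w) + Lam β αL αN lam w))
          * Lam' β αL αN lam (ρ * w)) := by
  have hαN : 0 < αN := hαL.trans hLN
  have hΛ0 : Lam β αL αN lam 0 = 0 := stmt9_lam_zero hαL hαN
  have hcontL : Continuous (Lam β αL αN lam) := stmt9_lam_continuous hαL hαN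
  have hGb_cont : Continuous (fun a : ℝ => Real.exp (-Lam β αL αN lam (max a 0))) :=
    ((hcontL.comp (continuous_id.max continuous_const)).neg).rexp
  have hΛnn : ∀ w, 0 ≤ w → 0 ≤ Lam β αL αN lam w := by
    intro w hw
    have h1 : ENNReal.ofReal (Real.exp (-Lam β αL αN lam w)) ≤ 1 :=
      (hLTccdf w hw) ▸ prob_le_one
    have h2 : Real.exp (-Lam β αL αN lam w) ≤ 1 := ENNReal.ofReal_le_one.mp h1
    have := Real.exp_le_one_iff.mp h2
    linarith
  haveI : IsProbabilityMeasure (μ.map LT) := Measure.isProbabilityMeasure_map hLT.aemeasurable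
  haveI : IsProbabilityMeasure (μ.map LR) := Measure.isProbabilityMeasure_map hLR.aemeasurable
  -- CCDF on Ioi for the mapped measures
  have hTIoi : ∀ a : ℝ, (μ.map LT) (Set.Ioi a)
      = ENNReal.ofReal (Real.exp (-Lam β αL αN lam (max a 0))) := by
    intro a
    rw [Measure.map_apply hLT measurableSet_Ioi]
    rcases le_or_gt 0 a with ha | ha
    · rw [max_eq_left ha]; exact hLTccdf a ha
    · rw [max_eq_right ha.le, hΛ0]
      have huniv : LT ⁻¹' Set.Ioi a = Set.univ :=
        Set.eq_univ_of_forall fun ω => ha.trans_le (hLTnn ω)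
      rw [huniv]
      simp
  have hRIoi : ∀ a : ℝ, (μ.map LR) (Set.Ioi a)
      = ENNReal.ofReal (Real.exp (-Lam β αL αN lam (max a 0))) := by
    intro a
    rw [Measure.map_apply hLR measurableSet_Ioi]
    rcases le_or_gt 0 a with ha | ha
    · rw [max_eq_left ha]; exact hLRccdf a ha
    · rw [max_eq_right ha.le, hΛ0]
      have huniv : LR ⁻¹' Set.Ioi a = Set.univ :=
        Set.eq_univ_of_forall fun ω => ha.trans_le (hLRnn ω)
      rw [huniv]
      simp
  have hTIci := stmt9_Ici (μ.map LT) _ hGb_cont hTIoi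
  have hRIci := stmt9_Ici (μ.map LR) _ hGb_cont hRIoi
  have hRatom := stmt9_atom (μ.map LR) _ hGb_cont hRIoi
  have hRIic0 : (μ.map LR) (Set.Iic 0) = 0 := by
    have h := hRIoi 0
    rw [← Set.compl_Ioi, prob_compl_eq_one_sub measurableSet_Ioi, h]
    simp [hΛ0]
  -- density identification on (0, q]
  have hfm : Measurable fun w : ℝ =>
      Lam' β αL αN lam w * Real.exp (-(Lam β αL αN lam w)) :=
    stmt9_lam'_measurable.mul (hcontL.neg.rexp).measurable
  have hRD : (μ.map LR).restrict (Set.Ioc 0 q)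
      = (volume.withDensity (fun w =>
          ENNReal.ofReal (Lam' β αL αN lam w * Real.exp (-(Lam β αL αN lam w))))).restrict
        (Set.Ioc 0 q) := by
    refine Measure.ext_of_Ioc _ _ fun a b hab => ?_
    rw [Measure.restrict_apply measurableSet_Ioc, Measure.restrict_apply measurableSet_Ioc,
      Set.Ioc_inter_Ioc]
    rcases le_or_gt (b ⊓ q) (a ⊔ 0) with hle | hlt
    · rw [Set.Ioc_eq_empty (not_lt.mpr hle)]
      simp
    · have h0 : (0:ℝ) ≤ a ⊔ 0 := le_max_right _ _
      have h0' : (0:ℝ) ≤ b ⊓ q := h0.trans hlt.le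
      have hL : (μ.map LR) (Set.Ioc (a ⊔ 0) (b ⊓ q))
          = ENNReal.ofReal (Real.exp (-Lam β αL αN lam (a ⊔ 0))
              - Real.exp (-Lam β αL αN lam (b ⊓ q))) := by
        rw [← Set.Ioi_diff_Ioi,
          measure_diff (Set.Ioi_subset_Ioi hlt.le) measurableSet_Ioi.nullMeasurableSet
            (measure_ne_top _ _),
          hRIoi, hRIoi, max_eq_left h0, max_eq_left h0',
          ENNReal.ofReal_sub _ (Real.exp_nonneg _)]
      have hint : IntegrableOn
          (fun w => Lam' β αL αN lam w * Real.exp (-(Lam β αL αN lam w)))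
          (Set.Ioc (a ⊔ 0) (b ⊓ q)) volume :=
        ((stmt9_ii_f hlam hβ hαL hαN hΛnn h0').1).mono_set (Set.Ioc_subset_Ioc h0 le_rfl)
      rw [hL, withDensity_apply _ measurableSet_Ioc,
        ← ofReal_integral_eq_lintegral_ofReal hint
          ((ae_restrict_iff' measurableSet_Ioc).mpr (ae_of_all _ fun w hw => by
            have h1 := stmt9_lam'_nonneg hlam.le hβ.le hαL hαN (h0.trans hw.1.le)
            positivity))]
      congr 1
      rw [← intervalIntegral.integral_of_le hlt.le]
      exact (stmt9_FTC2 hlam hβ hαL hαN hΛnn h0 hlt.le).symm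
  -- split the event
  rw [Set.setOf_or]
  have hdisj : Disjoint {ω | LT ω ≥ ρ * q ∧ LR ω ≥ q} {ω | LT ω ≥ ρ * LR ω ∧ LR ω < q} := by
    rw [Set.disjoint_left]
    rintro ω ⟨-, h1⟩ ⟨-, h2⟩
    exact absurd h1 (not_le.mpr h2)
  have hS : MeasurableSet {p : ℝ × ℝ | ρ * p.2 ≤ p.1 ∧ p.2 < q} :=
    (measurableSet_le (measurable_snd.const_mul ρ) measurable_fst).inter
      (measurableSet_lt measurable_snd measurable_const)
  have hpair : Measurable fun ω => (LT ω, LR ω) := hLT.prodMk hLR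
  have hE2meas : MeasurableSet {ω | LT ω ≥ ρ * LR ω ∧ LR ω < q} := hpair hS
  rw [measure_union hdisj hE2meas]
  -- first piece
  have hE1 : μ {ω | LT ω ≥ ρ * q ∧ LR ω ≥ q}
      = ENNReal.ofReal (Real.exp (-Lam β αL αN lam (ρ*q)) * Real.exp (-Lam β αL αN lam q)) := by
    have heq : {ω | LT ω ≥ ρ * q ∧ LR ω ≥ q}
        = LT ⁻¹' Set.Ici (ρ*q) ∩ LR ⁻¹' Set.Ici q := rfl
    rw [heq, hindep.measure_inter_preimage_eq_mul _ _ measurableSet_Ici measurableSet_Ici,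
      ← Measure.map_apply hLT measurableSet_Ici, ← Measure.map_apply hLR measurableSet_Ici,
      hTIci, hRIci, max_eq_left (by positivity), max_eq_left hq.le,
      ← ENNReal.ofReal_mul (Real.exp_nonneg _)]
  rw [hE1]
  -- second piece
  have hE2 : μ {ω | LT ω ≥ ρ * LR ω ∧ LR ω < q}
      = ENNReal.ofReal (∫ w in (0:ℝ)..q,
          Lam' β αL αN lam w * Real.exp (-(Lam β αL αN lam w))
            * Real.exp (-(Lam β αL αN lam (ρ*w)))) := by
    have hmapeq := (indepFun_iff_map_prod_eq_prod_map_map hLT.aemeasurable hLR.aemeasurable).mp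
      hindep
    have heq : {ω | LT ω ≥ ρ * LR ω ∧ LR ω < q}
        = (fun ω => (LT ω, LR ω)) ⁻¹' {p : ℝ × ℝ | ρ * p.2 ≤ p.1 ∧ p.2 < q} := rfl
    rw [heq, ← Measure.map_apply hpair hS, hmapeq, Measure.prod_apply_symm hS]
    have hsec : ∀ r : ℝ, (μ.map LT) ((fun t : ℝ => (t, r)) ⁻¹' {p : ℝ × ℝ | ρ * p.2 ≤ p.1 ∧ p.2 < q})
        = Set.indicator (Set.Iio q)
            (fun r => ENNReal.ofReal (Real.exp (-Lam β αL αN lam (max (ρ*r) 0)))) r := by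
      intro r
      by_cases hr : r < q
      · rw [Set.indicator_of_mem (Set.mem_Iio.mpr hr)]
        have hset : ((fun t : ℝ => (t, r)) ⁻¹' {p : ℝ × ℝ | ρ * p.2 ≤ p.1 ∧ p.2 < q})
            = Set.Ici (ρ*r) := by
          ext t
          simp [Set.mem_Ici, hr, and_comm]
        rw [hset, hTIci]
      · rw [Set.indicator_of_notMem (fun hmem => hr (Set.mem_Iio.mp hmem))]
        have hset : ((fun t : ℝ => (t, r)) ⁻¹' {p : ℝ × ℝ | ρ * p.2 ≤ p.1 ∧ p.2 < q})
            = (∅ : Set ℝ) := by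
          ext t
          simp [hr]
        rw [hset, measure_empty]
    rw [lintegral_congr hsec, lintegral_indicator measurableSet_Iio]
    have hsetae : Set.Iio q =ᵐ[μ.map LR] Set.Ioc 0 q := by
      rw [ae_eq_set]
      constructor
      · refine measure_mono_null (fun x hx => ?_) hRIic0
        rcases hx with ⟨hx1, hx2⟩
        by_contra hx3
        simp only [Set.mem_Iic, not_le] at hx3
        exact hx2 ⟨hx3, (Set.mem_Iio.mp hx1).le⟩
      · refine measure_mono_null (fun x hx => ?_) (hRatom q)
        rcases hx with ⟨hx1, hx2⟩
        have : x = q := le_antisymm hx1.2 (not_lt.mp hx2)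
        simp [this]
    rw [Measure.restrict_congr_set hsetae]
    rw [setLIntegral_congr_fun_ae measurableSet_Ioc (ae_of_all _ fun r hr => by
      rw [max_eq_left (mul_nonneg hρ.le hr.1.le)])]
    have hfnnm : Measurable fun w : ℝ =>
        ENNReal.ofReal (Lam' β αL αN lam w * Real.exp (-(Lam β αL αN lam w))) :=
      hfm.ennreal_ofReal
    have hgm : Measurable fun x : ℝ => ENNReal.ofReal (Real.exp (-Lam β αL αN lam (ρ * x))) :=
      (((hcontL.comp (continuous_const.mul continuous_id)).neg).rexp).measurable.ennreal_ofReal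
    rw [hRD, restrict_withDensity measurableSet_Ioc,
      lintegral_withDensity_eq_lintegral_mul _ hfnnm hgm]
    rw [setLIntegral_congr_fun_ae measurableSet_Ioc (ae_of_all _ fun r hr => by
      have h1 := stmt9_lam'_nonneg hlam.le hβ.le hαL hαN hr.1.le
      have h2 : (0:ℝ) ≤ Lam' β αL αN lam r * Real.exp (-(Lam β αL αN lam r)) := by positivity
      simp only [Pi.mul_apply]
      rw [← ENNReal.ofReal_mul h2])]
    have hint : IntegrableOn
        (fun w => Lam' β αL αN lam w * Real.exp (-(Lam β αL αN lam w))
          * Real.exp (-(Lam β αL αN lam (ρ*w)))) (Set.Ioc 0 q) volume :=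
      (stmt9_ii_h3 hlam hβ hαL hαN hρ hΛnn hq.le).1
    rw [← ofReal_integral_eq_lintegral_ofReal hint
      ((ae_restrict_iff' measurableSet_Ioc).mpr (ae_of_all _ fun w hw => by
        have h1 := stmt9_lam'_nonneg hlam.le hβ.le hαL hαN hw.1.le
        positivity))]
    rw [← intervalIntegral.integral_of_le hq.le]
  rw [hE2]
  -- final arithmetic
  have hI2nn : 0 ≤ ∫ w in (0:ℝ)..q,
      Lam' β αL αN lam w * Real.exp (-(Lam β αL αN lam w))
        * Real.exp (-(Lam β αL αN lam (ρ*w))) := by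
    refine intervalIntegral.integral_nonneg hq.le fun w hw => ?_
    have h1 := stmt9_lam'_nonneg hlam.le hβ.le hαL hαN hw.1
    positivity
  rw [← ENNReal.ofReal_add (by positivity) hI2nn]
  congr 1
  have key := stmt9_FTC hlam hβ hαL hαN hρ hΛnn hq.le
  have hii1 := stmt9_ii_h1 hlam hβ hαL hαN hρ hΛnn hq.le
  have hii2 := stmt9_ii_h2 hlam hβ hαL hαN hρ hΛnn hq.le
  have hsplit : ∫ w in (0:ℝ)..q,
      Real.exp (-(Lam β αL αN lam (ρ*w) + Lam β αL αN lam w))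
        * (ρ * Lam' β αL αN lam (ρ*w) + Lam' β αL αN lam w)
      = ρ * (∫ w in (0:ℝ)..q,
          Real.exp (-(Lam β αL αN lam (ρ*w) + Lam β αL αN lam w)) * Lam' β αL αN lam (ρ*w))
        + ∫ w in (0:ℝ)..q,
            Real.exp (-(Lam β αL αN lam (ρ*w) + Lam β αL αN lam w)) * Lam' β αL αN lam w := by
    rw [intervalIntegral.integral_congr (g := fun w =>
        ρ * (Real.exp (-(Lam β αL αN lam (ρ*w) + Lam β αL αN lam w)) * Lam' β αL αN lam (ρ*w))
        + Real.exp (-(Lam β αL αN lam (ρ*w) + Lam β αL αN lam w)) * Lam' β αL αN lam w)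
      (fun w _ => by ring),
      intervalIntegral.integral_add (hii1.const_mul ρ) hii2,
      intervalIntegral.integral_const_mul]
  have hI2eq : (∫ w in (0:ℝ)..q,
      Lam' β αL αN lam w * Real.exp (-(Lam β αL αN lam w))
        * Real.exp (-(Lam β αL αN lam (ρ*w))))
      = ∫ w in (0:ℝ)..q,
          Real.exp (-(Lam β αL αN lam (ρ*w) + Lam β αL αN lam w)) * Lam' β αL αN lam w := by
    refine intervalIntegral.integral_congr fun w _ => ?_
    rw [neg_add, Real.exp_add]
    ring
  have hprod : Real.exp (-Lam β αL αN lam (ρ*q)) * Real.exp (-Lam β αL αN lam q)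
      = Real.exp (-(Lam β αL αN lam (ρ*q) + Lam β αL αN lam q)) := by
    rw [neg_add, Real.exp_add]
  rw [hsplit] at key
  rw [hI2eq, hprod]
  linarith
end

section
/- Let λ, β > 0, 0 < α_L < α_N, ρ > 0, and let Λ̂₁(λ, w) = Σ_{i,j ∈ {M,S}} Λ(p_{ij}^{TW} λ, c_{ij} w) and Λ̂₂(λ, w) = Σ_{i,j ∈ {M,S}} Λ(p_{ij}^{JR} λ, d_{ij} w) with positive probability vectors (p_{ij}^{TW}), (p_{ij}^{JR}), positive constants (c_{ij}), (d_{ij}), and Λ as in the LOWJ analysis; let Λ̂₁′, Λ̂₂′ denote the derivatives in w. Let X and Y be independent nonnegative random variables with P(X > w) = e^{−Λ̂₁(λ, w)} and P(Y > w) = e^{−Λ̂₂(λ, w)}. Then for every η₂ > 0, P( (X ≥ ρη₂ and Y ≥ η₂) or (X ≥ ρY and Y < η₂) ) = 1 − ρ ∫₀^{η₂} e^{−(Λ̂₁(λ, ρw) + Λ̂₂(λ, w))} Λ̂₁′(λ, ρw) dw. (This is the second case of ζ_{κ,l,m}^{τ,n,o}(u, v) in Lemma 6, equation (39).) -/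
open MeasureTheory Real ProbabilityTheory intervalIntegral

/-- Main lobe / side lobe index. -/
inductive Lobe
  | M
  | S
  deriving DecidableEq

instance : Fintype Lobe where
  elems := {Lobe.M, Lobe.S}
  complete := fun x => by cases x <;> simp

/-- The antenna-gain-weighted sum `Λ̂(λ, w) = Σ_{i,j} Λ(p_{ij}λ, c_{ij}w)`. -/
noncomputable def hatLam (β αL αN : ℝ) (p c : Lobe × Lobe → ℝ) (lam w : ℝ) : ℝ :=
  ∑ ij : Lobe × Lobe, Lam β αL αN (p ij * lam) (c ij * w)

/-- Its derivative `Λ̂′(λ, w) = Σ_{i,j} c_{ij} Λ′(p_{ij}λ, c_{ij}w)` in `w`. -/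
noncomputable def hatLam' (β αL αN : ℝ) (p c : Lobe × Lobe → ℝ) (lam w : ℝ) : ℝ :=
  ∑ ij : Lobe × Lobe, c ij * Lam' β αL αN (p ij * lam) (c ij * w)

lemma hasDerivAt_Lam {αL αN : ℝ} (hαL : 0 < αL) (hαN : 0 < αN) {β : ℝ} (hβ : β ≠ 0) (l : ℝ) {w : ℝ} (hw : 0 < w) :
    HasDerivAt (fun w => Lam β αL αN l w) (Lam' β αL αN l w) w := by
  have hwne : w ≠ 0 := ne_of_gt hw
  have hN : HasDerivAt (fun w : ℝ => w ^ (2/αN)) ((2/αN) * w ^ (2/αN - 1)) w :=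
    Real.hasDerivAt_rpow_const (Or.inl hwne)
  have huL : HasDerivAt (fun w : ℝ => β * w ^ (1/αL)) (β * ((1/αL) * w ^ (1/αL - 1))) w :=
    (Real.hasDerivAt_rpow_const (Or.inl hwne)).const_mul β
  have huN : HasDerivAt (fun w : ℝ => β * w ^ (1/αN)) (β * ((1/αN) * w ^ (1/αN - 1))) w :=
    (Real.hasDerivAt_rpow_const (Or.inl hwne)).const_mul β
  have hfL : HasDerivAt (fun w : ℝ => (1 + β * w ^ (1/αL)) * Real.exp (-(β * w ^ (1/αL))))
      ((β * ((1/αL) * w ^ (1/αL - 1))) * Real.exp (-(β * w ^ (1/αL)))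
        + (1 + β * w ^ (1/αL)) * (Real.exp (-(β * w ^ (1/αL))) * -(β * ((1/αL) * w ^ (1/αL - 1))))) w :=
    (huL.const_add 1).mul (huL.neg.exp)
  have hfN : HasDerivAt (fun w : ℝ => (1 + β * w ^ (1/αN)) * Real.exp (-(β * w ^ (1/αN))))
      ((β * ((1/αN) * w ^ (1/αN - 1))) * Real.exp (-(β * w ^ (1/αN)))
        + (1 + β * w ^ (1/αN)) * (Real.exp (-(β * w ^ (1/αN))) * -(β * ((1/αN) * w ^ (1/αN - 1))))) w :=
    (huN.const_add 1).mul (huN.neg.exp)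
  have key := ((hN.const_mul (l * π)).sub (hfL.const_mul (2 * π * l / β ^ 2))).add
      (hfN.const_mul (2 * π * l / β ^ 2))
  have hfun : (fun w => Lam β αL αN l w)
      = fun w => (l * π) * w ^ (2/αN)
        - (2 * π * l / β ^ 2) * ((1 + β * w ^ (1/αL)) * Real.exp (-(β * w ^ (1/αL))))
        + (2 * π * l / β ^ 2) * ((1 + β * w ^ (1/αN)) * Real.exp (-(β * w ^ (1/αN)))) := by
    funext x; unfold Lam; ring
  rw [hfun]
  refine key.congr_deriv ?_
  have h1L : w ^ (1/αL - 1) = w ^ (1/αL) / w := by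
    rw [Real.rpow_sub hw, Real.rpow_one]
  have h1N : w ^ (1/αN - 1) = w ^ (1/αN) / w := by
    rw [Real.rpow_sub hw, Real.rpow_one]
  have h2L : w ^ (2/αL - 1) = w ^ (1/αL) * w ^ (1/αL) / w := by
    rw [Real.rpow_sub hw, Real.rpow_one, show (2:ℝ)/αL = 1/αL + 1/αL by ring,
      Real.rpow_add hw]
  have h2N : w ^ (2/αN - 1) = w ^ (1/αN) * w ^ (1/αN) / w := by
    rw [Real.rpow_sub hw, Real.rpow_one, show (2:ℝ)/αN = 1/αN + 1/αN by ring,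
      Real.rpow_add hw]
  unfold Lam'
  rw [h1L, h1N, h2L, h2N]
  have hwne' : w ≠ 0 := ne_of_gt hw
  field_simp
  ring

lemma hasDerivAt_hatLam {αL αN : ℝ} (hαL : 0 < αL) (hαN : 0 < αN) {β : ℝ} (hβ : β ≠ 0)
    (p c : Lobe × Lobe → ℝ) (hc : ∀ ij, 0 < c ij) (lam : ℝ) {w : ℝ} (hw : 0 < w) :
    HasDerivAt (fun w => hatLam β αL αN p c lam w) (hatLam' β αL αN p c lam w) w := by
  unfold hatLam hatLam'
  apply HasDerivAt.fun_sum
  intro ij _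
  have hmul : HasDerivAt (fun w : ℝ => c ij * w) (c ij) w := by
    simpa using (hasDerivAt_id w).const_mul (c ij)
  have h := (hasDerivAt_Lam hαL hαN hβ (p ij * lam) (mul_pos (hc ij) hw)).comp w hmul
  have : (fun w => Lam β αL αN (p ij * lam) w) ∘ (fun w : ℝ => c ij * w)
      = fun w => Lam β αL αN (p ij * lam) (c ij * w) := rfl
  rw [this] at h
  simpa [mul_comm] using h

lemma continuous_Lam {αL αN : ℝ} (hαL : 0 < αL) (hαN : 0 < αN) (β l : ℝ) :
    Continuous (fun w => Lam β αL αN l w) := by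
  unfold Lam
  have hrL : Continuous fun w : ℝ => w ^ (1/αL) :=
    Real.continuous_rpow_const (by positivity)
  have hrN : Continuous fun w : ℝ => w ^ (1/αN) :=
    Real.continuous_rpow_const (by positivity)
  have hr2N : Continuous fun w : ℝ => w ^ (2/αN) :=
    Real.continuous_rpow_const (by positivity)
  fun_prop

lemma continuous_hatLam {αL αN : ℝ} (hαL : 0 < αL) (hαN : 0 < αN)
    (β : ℝ) (p c : Lobe × Lobe → ℝ) (lam : ℝ) :
    Continuous (fun w => hatLam β αL αN p c lam w) := by
  unfold hatLam
  exact continuous_finset_sum _ fun ij _ =>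
    (continuous_Lam hαL hαN β (p ij * lam)).comp (continuous_const.mul continuous_id)

lemma Lam'_nonneg {αL αN : ℝ} (hαL : 0 < αL) (hαN : 0 < αN) {β l w : ℝ}
    (hβ : 0 ≤ β) (hl : 0 ≤ l) (hw : 0 ≤ w) : 0 ≤ Lam' β αL αN l w := by
  unfold Lam'
  have h1 : Real.exp (-(β * w ^ (1/αN))) ≤ 1 := by
    rw [Real.exp_le_one_iff]
    have : 0 ≤ β * w ^ (1/αN) := mul_nonneg hβ (Real.rpow_nonneg hw _)
    linarith
  have h2 : (0:ℝ) ≤ 1 - Real.exp (-(β * w ^ (1/αN))) := by linarith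
  have := Real.pi_pos
  positivity

lemma hatLam'_nonneg {αL αN : ℝ} (hαL : 0 < αL) (hαN : 0 < αN) {β lam : ℝ}
    (hβ : 0 ≤ β) (hlam : 0 ≤ lam) (p c : Lobe × Lobe → ℝ)
    (hp : ∀ ij, 0 < p ij) (hc : ∀ ij, 0 < c ij) {w : ℝ} (hw : 0 ≤ w) :
    0 ≤ hatLam' β αL αN p c lam w := by
  unfold hatLam'
  apply Finset.sum_nonneg
  intro ij _
  exact mul_nonneg (hc ij).le
    (Lam'_nonneg hαL hαN hβ (mul_nonneg (hp ij).le hlam) (mul_nonneg (hc ij).le hw))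

lemma Lam_zero {αL αN : ℝ} (hαL : 0 < αL) (hαN : 0 < αN) (β l : ℝ) :
    Lam β αL αN l 0 = 0 := by
  unfold Lam
  rw [Real.zero_rpow (by positivity), Real.zero_rpow (by positivity),
    Real.zero_rpow (by positivity)]
  ring

lemma hatLam_zero {αL αN : ℝ} (hαL : 0 < αL) (hαN : 0 < αN)
    (β : ℝ) (p c : Lobe × Lobe → ℝ) (lam : ℝ) :
    hatLam β αL αN p c lam 0 = 0 := by
  unfold hatLam
  simp [Lam_zero hαL hαN]

lemma hatLam_nonneg {αL αN : ℝ} (hαL : 0 < αL) (hαN : 0 < αN) {β lam : ℝ}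
    (hβ : 0 < β) (hlam : 0 ≤ lam) (p c : Lobe × Lobe → ℝ)
    (hp : ∀ ij, 0 < p ij) (hc : ∀ ij, 0 < c ij) {w : ℝ} (hw : 0 ≤ w) :
    0 ≤ hatLam β αL αN p c lam w := by
  have hmono : MonotoneOn (fun w => hatLam β αL αN p c lam w) (Set.Ici 0) := by
    apply monotoneOn_of_deriv_nonneg (convex_Ici 0)
      (continuous_hatLam hαL hαN β p c lam).continuousOn
    · intro x hx
      rw [interior_Ici] at hx
      exact (hasDerivAt_hatLam hαL hαN hβ.ne' p c hc lam hx).differentiableAt.differentiableWithinAt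
    · intro x hx
      rw [interior_Ici] at hx
      rw [(hasDerivAt_hatLam hαL hαN hβ.ne' p c hc lam hx).deriv]
      exact hatLam'_nonneg hαL hαN hβ.le hlam p c hp hc hx.le
  have h := hmono (Set.self_mem_Ici) hw hw
  simpa [hatLam_zero hαL hαN] using h

lemma cdf_lt_of_ccdf {Ω : Type*} [MeasurableSpace Ω] (μ : Measure Ω) [IsProbabilityMeasure μ]
    {W : Ω → ℝ} (hW : Measurable W) {H : ℝ → ℝ} (hHc : Continuous H)
    (hcc : ∀ w : ℝ, 0 ≤ w → μ {ω | W ω > w} = ENNReal.ofReal (Real.exp (-H w)))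
    {t : ℝ} (ht : 0 < t) :
    μ {ω | W ω < t} = ENNReal.ofReal (1 - Real.exp (-H t)) := by
  set s : ℕ → ℝ := fun n => t - t / (n + 2) with hs
  have hs_nonneg : ∀ n : ℕ, 0 ≤ s n := by
    intro n
    have h1 : t / (n + 2) ≤ t / 1 := by
      apply div_le_div_of_nonneg_left ht.le one_pos
      · push_cast; linarith [Nat.cast_nonneg (α := ℝ) n]
    simp only [div_one] at h1
    simp only [hs, sub_nonneg]
    exact h1
  have hs_lt : ∀ n : ℕ, s n < t := by
    intro n
    have : 0 < t / (n + 2) := by positivity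
    simp only [hs]; linarith
  set A : ℕ → Set Ω := fun n => {ω | W ω ≤ s n} with hA
  have hs_mono : Monotone s := by
    intro n m hnm
    simp only [hs, sub_le_sub_iff_left]
    apply div_le_div_of_nonneg_left ht.le (by positivity)
    have : (n:ℝ) ≤ (m:ℝ) := Nat.cast_le.mpr hnm
    linarith
  have hA_mono : Monotone A := fun n m hnm ω hω => le_trans hω (hs_mono hnm)
  have hA_union : ⋃ n, A n = {ω | W ω < t} := by
    ext ω
    simp only [Set.mem_iUnion, hA, Set.mem_setOf_eq]
    constructor
    · rintro ⟨n, hn⟩; exact lt_of_le_of_lt hn (hs_lt n)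
    · intro hω
      set d := t - W ω with hd
      have hd0 : 0 < d := by simp only [hd]; linarith
      obtain ⟨n, hn⟩ := exists_nat_ge (t / d)
      refine ⟨n, ?_⟩
      have h2 : t / ((n:ℝ) + 2) ≤ d := by
        rw [div_le_iff₀ (by positivity)]
        have h3 : t / d ≤ (n:ℝ) + 2 := by linarith
        have h4 := mul_le_mul_of_nonneg_right h3 hd0.le
        rw [div_mul_cancel₀ t hd0.ne'] at h4
        linarith
      simp only [hs]; linarith
  have hμA : ∀ n, μ (A n) = ENNReal.ofReal (1 - Real.exp (-H (s n))) := by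
    intro n
    have hAc : A n = {ω | W ω > s n}ᶜ := by
      ext ω; simp [hA, not_lt]
    rw [hAc, measure_compl (by exact measurableSet_lt measurable_const hW) (measure_ne_top μ _),
      hcc (s n) (hs_nonneg n), measure_univ]
    rw [ENNReal.ofReal_sub _ (Real.exp_nonneg _), ENNReal.ofReal_one]
  have htend1 : Filter.Tendsto (μ ∘ A) Filter.atTop (nhds (μ {ω | W ω < t})) := by
    rw [← hA_union]
    exact tendsto_measure_iUnion_atTop hA_mono
  have hstend : Filter.Tendsto s Filter.atTop (nhds t) := by
    have h1 : Filter.Tendsto (fun n : ℕ => ((n:ℝ) + 2)) Filter.atTop Filter.atTop :=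
      Filter.tendsto_atTop_add_const_right _ 2 tendsto_natCast_atTop_atTop
    have h2 : Filter.Tendsto (fun n : ℕ => t / ((n:ℝ) + 2)) Filter.atTop (nhds 0) :=
      Filter.Tendsto.div_atTop tendsto_const_nhds h1
    have h3 : Filter.Tendsto (fun _ : ℕ => t) Filter.atTop (nhds t) := tendsto_const_nhds
    have := h3.sub h2
    simpa using this
  have htend2 : Filter.Tendsto (μ ∘ A) Filter.atTop
      (nhds (ENNReal.ofReal (1 - Real.exp (-H t)))) := by
    have hcont : Continuous fun x : ℝ => ENNReal.ofReal (1 - Real.exp (-H x)) :=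
      ENNReal.continuous_ofReal.comp (continuous_const.sub (Real.continuous_exp.comp hHc.neg))
    have := (hcont.tendsto t).comp hstend
    apply Filter.Tendsto.congr _ this
    intro n
    simp [hμA n]
  exact tendsto_nhds_unique htend1 htend2

lemma Lam'_le {αL αN : ℝ} (hαL : 0 < αL) (hαN : 0 < αN) {β l u : ℝ}
    (hβ : 0 ≤ β) (hl : 0 ≤ l) (hu : 0 ≤ u) :
    Lam' β αL αN l u ≤ (2 * π * l / αN) * u ^ (2 / αN - 1)
      + (2 * π * l / αL) * u ^ (2 / αL - 1) := by
  unfold Lam'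
  have hπ := Real.pi_pos
  have e1 : Real.exp (-(β * u ^ (1 / αN))) ≤ 1 := by
    rw [Real.exp_le_one_iff]
    have : 0 ≤ β * u ^ (1 / αN) := mul_nonneg hβ (Real.rpow_nonneg hu _)
    linarith
  have e2 : Real.exp (-(β * u ^ (1 / αL))) ≤ 1 := by
    rw [Real.exp_le_one_iff]
    have : 0 ≤ β * u ^ (1 / αL) := mul_nonneg hβ (Real.rpow_nonneg hu _)
    linarith
  have h1 : (2 * π * l / αN) * u ^ (2 / αN - 1) * (1 - Real.exp (-(β * u ^ (1 / αN))))
      ≤ (2 * π * l / αN) * u ^ (2 / αN - 1) * 1 := by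
    apply mul_le_mul_of_nonneg_left (by linarith [Real.exp_pos (-(β * u ^ (1/αN)))])
    positivity
  have h2 : (2 * π * l / αL) * u ^ (2 / αL - 1) * Real.exp (-(β * u ^ (1 / αL)))
      ≤ (2 * π * l / αL) * u ^ (2 / αL - 1) * 1 := by
    apply mul_le_mul_of_nonneg_left e2
    positivity
  linarith

lemma intervalIntegrable_of_le_hat {β αL αN lam ρ : ℝ} {p c : Lobe × Lobe → ℝ}
    (hlam : 0 < lam) (hβ : 0 < β) (hαL : 0 < αL) (hαN : 0 < αN) (hρ : 0 < ρ)
    (hp : ∀ ij, 0 < p ij) (hc : ∀ ij, 0 < c ij) {z : ℝ} (hz : 0 ≤ z)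
    {φ : ℝ → ℝ} (hφm : Measurable φ)
    (hφ : ∀ w ∈ Set.Ioc (0:ℝ) z, |φ w| ≤ ρ * hatLam' β αL αN p c lam (ρ * w)) :
    IntervalIntegrable φ MeasureTheory.volume 0 z := by
  set KN : ℝ := ∑ ij : Lobe × Lobe, ρ * (c ij * ((2 * π * (p ij * lam) / αN)
    * (c ij * ρ) ^ (2 / αN - 1))) with hKN
  set KL : ℝ := ∑ ij : Lobe × Lobe, ρ * (c ij * ((2 * π * (p ij * lam) / αL)
    * (c ij * ρ) ^ (2 / αL - 1))) with hKL
  set B : ℝ → ℝ := fun w => KN * w ^ (2 / αN - 1) + KL * w ^ (2 / αL - 1) with hB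
  have hBint : IntervalIntegrable B MeasureTheory.volume 0 z := by
    apply IntervalIntegrable.add
    · exact (intervalIntegral.intervalIntegrable_rpow' (by
        have : 0 < 2 / αN := by positivity
        linarith)).const_mul KN
    · exact (intervalIntegral.intervalIntegrable_rpow' (by
        have : 0 < 2 / αL := by positivity
        linarith)).const_mul KL
  apply IntervalIntegrable.mono_fun' hBint hφm.aestronglyMeasurable
  rw [Set.uIoc_of_le hz]
  filter_upwards [MeasureTheory.ae_restrict_mem measurableSet_Ioc] with w hw
  refine (hφ w hw).trans ?_
  have hw0 : 0 < w := hw.1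
  have key : ∀ ij : Lobe × Lobe,
      c ij * Lam' β αL αN (p ij * lam) (c ij * (ρ * w))
        ≤ c ij * ((2 * π * (p ij * lam) / αN) * (c ij * ρ) ^ (2 / αN - 1)) * w ^ (2 / αN - 1)
          + c ij * ((2 * π * (p ij * lam) / αL) * (c ij * ρ) ^ (2 / αL - 1)) * w ^ (2 / αL - 1) := by
    intro ij
    have hu : (0:ℝ) ≤ c ij * (ρ * w) := mul_nonneg (hc ij).le (mul_nonneg hρ.le hw0.le)
    have hle := Lam'_le hαL hαN hβ.le (mul_nonneg (hp ij).le hlam.le) hu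
    have hrw : ∀ e : ℝ, (c ij * (ρ * w)) ^ e = (c ij * ρ) ^ e * w ^ e := by
      intro e
      rw [show c ij * (ρ * w) = (c ij * ρ) * w by ring,
        Real.mul_rpow (mul_nonneg (hc ij).le hρ.le) hw0.le]
    rw [hrw, hrw] at hle
    calc c ij * Lam' β αL αN (p ij * lam) (c ij * (ρ * w))
        ≤ c ij * ((2 * π * (p ij * lam) / αN) * ((c ij * ρ) ^ (2/αN - 1) * w ^ (2/αN - 1))
          + (2 * π * (p ij * lam) / αL) * ((c ij * ρ) ^ (2/αL - 1) * w ^ (2/αL - 1))) :=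
        mul_le_mul_of_nonneg_left hle (hc ij).le
      _ = _ := by ring
  have hsum : ρ * hatLam' β αL αN p c lam (ρ * w) ≤ B w := by
    have h1 : ρ * hatLam' β αL αN p c lam (ρ * w)
        = ∑ ij : Lobe × Lobe, ρ * (c ij * Lam' β αL αN (p ij * lam) (c ij * (ρ * w))) := by
      unfold hatLam'
      rw [Finset.mul_sum]
    have h2 : B w = ∑ ij : Lobe × Lobe,
        ρ * (c ij * ((2 * π * (p ij * lam) / αN) * (c ij * ρ) ^ (2 / αN - 1)) * w ^ (2 / αN - 1)
          + c ij * ((2 * π * (p ij * lam) / αL) * (c ij * ρ) ^ (2 / αL - 1)) * w ^ (2 / αL - 1)) := by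
      simp only [hB]
      rw [hKN, hKL, Finset.sum_mul, Finset.sum_mul, ← Finset.sum_add_distrib]
      apply Finset.sum_congr rfl
      intro ij _
      ring
    rw [h1, h2]
    apply Finset.sum_le_sum
    intro ij _
    exact mul_le_mul_of_nonneg_left (key ij) hρ.le
  exact hsum

lemma measurable_hatLam' {β αL αN lam : ℝ} (p c : Lobe × Lobe → ℝ) :
    Measurable (fun w => hatLam' β αL αN p c lam w) := by
  unfold hatLam' Lam'
  apply Finset.measurable_sum
  intro ij _
  apply Measurable.const_mul
  have h1 : ∀ e : ℝ, Measurable fun w : ℝ => (c ij * w) ^ e := by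
    intro e
    have hb : Measurable fun w : ℝ => c ij * w := measurable_id.const_mul (c ij)
    have hr : Measurable fun x : ℝ => x ^ e := by measurability
    exact hr.comp hb
  apply Measurable.add
  · exact (((h1 _).const_mul _).mul
      (measurable_const.sub (Real.measurable_exp.comp (((h1 _).const_mul β).neg))))
  · exact (((h1 _).const_mul _).mul
      (Real.measurable_exp.comp (((h1 _).const_mul β).neg)))

lemma ftc_hat {β αL αN lam ρ : ℝ} {p c : Lobe × Lobe → ℝ}
    (hlam : 0 < lam) (hβ : 0 < β) (hαL : 0 < αL) (hαN : 0 < αN) (hρ : 0 < ρ)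
    (hp : ∀ ij, 0 < p ij) (hc : ∀ ij, 0 < c ij) {z : ℝ} (hz : 0 ≤ z) :
    ∫ w in (0:ℝ)..z, ρ * (Real.exp (-(hatLam β αL αN p c lam (ρ * w)))
        * hatLam' β αL αN p c lam (ρ * w))
      = 1 - Real.exp (-(hatLam β αL αN p c lam (ρ * z))) := by
  set φ : ℝ → ℝ := fun w => ρ * (Real.exp (-(hatLam β αL αN p c lam (ρ * w)))
    * hatLam' β αL αN p c lam (ρ * w)) with hφ
  set f : ℝ → ℝ := fun w => 1 - Real.exp (-(hatLam β αL αN p c lam (ρ * w))) with hf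
  have hfc : Continuous f := by
    apply continuous_const.sub
    exact Real.continuous_exp.comp
      (((continuous_hatLam hαL hαN β p c lam).comp (continuous_const.mul continuous_id)).neg)
  have hφm : Measurable φ := by
    apply Measurable.const_mul
    apply Measurable.mul
    · exact (Real.continuous_exp.comp
        (((continuous_hatLam hαL hαN β p c lam).comp
          (continuous_const.mul continuous_id)).neg)).measurable
    · exact (measurable_hatLam' p c).comp (measurable_const.mul measurable_id)
  have hφint : IntervalIntegrable φ MeasureTheory.volume 0 z := by
    apply intervalIntegrable_of_le_hat hlam hβ hαL hαN hρ hp hc hz hφm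
    intro w hw
    have hw0 : 0 < w := hw.1
    have hH0 : 0 ≤ hatLam β αL αN p c lam (ρ * w) :=
      hatLam_nonneg hαL hαN hβ hlam.le p c hp hc (by positivity)
    have hexp : Real.exp (-(hatLam β αL αN p c lam (ρ * w))) ≤ 1 := by
      rw [Real.exp_le_one_iff]; linarith
    have hh' : 0 ≤ hatLam' β αL αN p c lam (ρ * w) :=
      hatLam'_nonneg hαL hαN hβ.le hlam.le p c hp hc (by positivity)
    rw [hφ, abs_of_nonneg (by positivity)]
    have h5 := mul_le_mul_of_nonneg_right hexp hh'
    rw [one_mul] at h5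
    exact mul_le_mul_of_nonneg_left h5 hρ.le
  have hderiv : ∀ x ∈ Set.Ioo 0 z, HasDerivWithinAt f (φ x) (Set.Ioi x) x := by
    intro x hx
    have hmul : HasDerivAt (fun w : ℝ => ρ * w) ρ x := by
      simpa using (hasDerivAt_id x).const_mul ρ
    have hH := (hasDerivAt_hatLam hαL hαN hβ.ne' p c hc lam
      (mul_pos hρ hx.1)).comp x hmul
    have hHfun : (fun w => hatLam β αL αN p c lam w) ∘ (fun w : ℝ => ρ * w)
        = fun w => hatLam β αL αN p c lam (ρ * w) := rfl
    rw [hHfun] at hH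
    have hfd : HasDerivAt f (-(Real.exp (-(hatLam β αL αN p c lam (ρ * x)))
        * -(hatLam' β αL αN p c lam (ρ * x) * ρ))) x := (hH.neg.exp).const_sub 1
    have : -(Real.exp (-(hatLam β αL αN p c lam (ρ * x)))
        * -(hatLam' β αL αN p c lam (ρ * x) * ρ)) = φ x := by
      rw [hφ]; ring
    rw [this] at hfd
    exact hfd.hasDerivWithinAt
  have heq := intervalIntegral.integral_eq_sub_of_hasDeriv_right_of_le hz
    hfc.continuousOn hderiv hφint
  exact heq.trans (by simp [hf, hatLam_zero hαL hαN])


/-- Under the POWJ attack (second case of `ζ_{κ,l,m}^{τ,n,o}(u,v)`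
in Lemma 6, equation (39)),
`P((X ≥ ρη₂, Y ≥ η₂) or (X ≥ ρY, Y < η₂)) = 1 − ρ∫₀^{η₂} e^{−(Λ̂₁(λ,ρw)+Λ̂₂(λ,w))} Λ̂₁′(λ,ρw) dw`. -/
theorem stmt13 {Ω : Type*} [MeasurableSpace Ω] (μ : Measure Ω) [IsProbabilityMeasure μ]
    (lam β αL αN ρ : ℝ) (hlam : 0 < lam) (hβ : 0 < β)
    (hαL : 0 < αL) (hLN : αL < αN) (hρ : 0 < ρ)
    (pTW pJR cTW cJR : Lobe × Lobe → ℝ)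
    (hpTW : ∀ ij, 0 < pTW ij) (hpTWsum : ∑ ij, pTW ij = 1)
    (hpJR : ∀ ij, 0 < pJR ij) (hpJRsum : ∑ ij, pJR ij = 1)
    (hcTW : ∀ ij, 0 < cTW ij) (hcJR : ∀ ij, 0 < cJR ij)
    (X Y : Ω → ℝ) (hX : Measurable X) (hY : Measurable Y)
    (hXnn : ∀ ω, 0 ≤ X ω) (hYnn : ∀ ω, 0 ≤ Y ω)
    (hindep : IndepFun X Y μ)
    (hXccdf : ∀ w : ℝ, 0 ≤ w →
      μ {ω | X ω > w} = ENNReal.ofReal (Real.exp (-hatLam β αL αN pTW cTW lam w)))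
    (hYccdf : ∀ w : ℝ, 0 ≤ w →
      μ {ω | Y ω > w} = ENNReal.ofReal (Real.exp (-hatLam β αL αN pJR cJR lam w)))
    (η₂ : ℝ) (hη₂ : 0 < η₂) :
    μ {ω | (X ω ≥ ρ * η₂ ∧ Y ω ≥ η₂) ∨ (X ω ≥ ρ * Y ω ∧ Y ω < η₂)} =
      ENNReal.ofReal (1 - ρ * ∫ w in (0:ℝ)..η₂,
        Real.exp (-(hatLam β αL αN pTW cTW lam (ρ * w) + hatLam β αL αN pJR cJR lam w))
          * hatLam' β αL αN pTW cTW lam (ρ * w)) := by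
  have hαN : 0 < αN := hαL.trans hLN
  set I : ℝ := ∫ w in (0:ℝ)..η₂,
    Real.exp (-(hatLam β αL αN pTW cTW lam (ρ * w) + hatLam β αL αN pJR cJR lam w))
      * hatLam' β αL αN pTW cTW lam (ρ * w) with hIdef
  set φ : ℝ → ℝ := fun w => ρ * (Real.exp (-(hatLam β αL αN pTW cTW lam (ρ * w)))
    * hatLam' β αL αN pTW cTW lam (ρ * w)) with hφdef
  set ψ : ℝ → ℝ := fun w => φ w * Real.exp (-(hatLam β αL αN pJR cJR lam w)) with hψdef
  -- measurability and nonnegativity of φ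
  have hφm : Measurable φ := by
    apply Measurable.const_mul
    apply Measurable.mul
    · exact (Real.continuous_exp.comp
        (((continuous_hatLam hαL hαN β pTW cTW lam).comp
          (continuous_const.mul continuous_id)).neg)).measurable
    · exact (measurable_hatLam' pTW cTW).comp (measurable_const.mul measurable_id)
  have hφnn : ∀ w : ℝ, 0 ≤ w → 0 ≤ φ w := by
    intro w hw
    have h1 := hatLam'_nonneg hαL hαN hβ.le hlam.le pTW cTW hpTW hcTW
      (by positivity : (0:ℝ) ≤ ρ * w)
    have h2 := Real.exp_nonneg (-(hatLam β αL αN pTW cTW lam (ρ * w)))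
    rw [hφdef]
    positivity
  have hφbound : ∀ z : ℝ, 0 ≤ z → ∀ w ∈ Set.Ioc (0:ℝ) z,
      |φ w| ≤ ρ * hatLam' β αL αN pTW cTW lam (ρ * w) := by
    intro z hz w hw
    have hw0 : 0 < w := hw.1
    have hH0 : 0 ≤ hatLam β αL αN pTW cTW lam (ρ * w) :=
      hatLam_nonneg hαL hαN hβ hlam.le pTW cTW hpTW hcTW (by positivity)
    have hexp : Real.exp (-(hatLam β αL αN pTW cTW lam (ρ * w))) ≤ 1 := by
      rw [Real.exp_le_one_iff]; linarith
    have hh' : 0 ≤ hatLam' β αL αN pTW cTW lam (ρ * w) :=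
      hatLam'_nonneg hαL hαN hβ.le hlam.le pTW cTW hpTW hcTW (by positivity)
    rw [abs_of_nonneg (hφnn w hw0.le), hφdef]
    have h5 := mul_le_mul_of_nonneg_right hexp hh'
    rw [one_mul] at h5
    exact mul_le_mul_of_nonneg_left h5 hρ.le
  -- Step 1 : rewrite the event
  have hset : {ω | (X ω ≥ ρ * η₂ ∧ Y ω ≥ η₂) ∨ (X ω ≥ ρ * Y ω ∧ Y ω < η₂)}
      = {ω | ρ * min (Y ω) η₂ ≤ X ω} := by
    ext ω
    simp only [Set.mem_setOf_eq, ge_iff_le]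
    rcases lt_or_ge (Y ω) η₂ with h | h
    · rw [min_eq_left h.le]
      constructor
      · rintro (⟨h1, h2⟩ | ⟨h1, h2⟩)
        · linarith
        · exact h1
      · intro h1; right; exact ⟨h1, h⟩
    · rw [min_eq_right h]
      constructor
      · rintro (⟨h1, h2⟩ | ⟨h1, h2⟩)
        · exact h1
        · linarith
      · intro h1; left; exact ⟨h1, h⟩
  rw [hset]
  -- Step 2 : complement
  have hSm : MeasurableSet {ω | ρ * min (Y ω) η₂ ≤ X ω} :=
    measurableSet_le ((hY.min measurable_const).const_mul ρ) hX
  have hcompl : {ω | ρ * min (Y ω) η₂ ≤ X ω}ᶜ = {ω | X ω < ρ * min (Y ω) η₂} := by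
    ext ω; simp [not_le]
  have hμcompl : μ {ω | X ω < ρ * min (Y ω) η₂} = 1 - μ {ω | ρ * min (Y ω) η₂ ≤ X ω} := by
    rw [← hcompl, measure_compl hSm (measure_ne_top μ _), measure_univ]
  -- Step 3 : product measure
  set νx : Measure ℝ := μ.map X with hνx
  set νy : Measure ℝ := μ.map Y with hνy
  haveI : IsProbabilityMeasure νy := Measure.isProbabilityMeasure_map hY.aemeasurable
  haveI : IsProbabilityMeasure νx := Measure.isProbabilityMeasure_map hX.aemeasurable
  have hpair : μ.map (fun ω => (X ω, Y ω)) = νx.prod νy :=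
    (ProbabilityTheory.indepFun_iff_map_prod_eq_prod_map_map hX.aemeasurable
      hY.aemeasurable).mp hindep
  have hq_meas : MeasurableSet {q : ℝ × ℝ | q.1 < ρ * min q.2 η₂} :=
    measurableSet_lt measurable_fst ((measurable_snd.min measurable_const).const_mul ρ)
  have step3 : μ {ω | X ω < ρ * min (Y ω) η₂}
      = ∫⁻ y, νx {x | x < ρ * min y η₂} ∂νy := by
    have h1 : {ω | X ω < ρ * min (Y ω) η₂}
        = (fun ω => (X ω, Y ω)) ⁻¹' {q : ℝ × ℝ | q.1 < ρ * min q.2 η₂} := rfl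
    rw [h1, ← Measure.map_apply (hX.prodMk hY) hq_meas, hpair,
      Measure.prod_apply_symm hq_meas]
    rfl
  -- the cdf of X
  have hcdfX : ∀ t : ℝ, 0 ≤ t →
      μ {ω | X ω < t}
        = ENNReal.ofReal (1 - Real.exp (-(hatLam β αL αN pTW cTW lam t))) := by
    intro t ht
    rcases ht.lt_or_eq with h | h
    · exact cdf_lt_of_ccdf μ hX (continuous_hatLam hαL hαN β pTW cTW lam)
        (fun w hw => hXccdf w hw) h
    · rw [← h]
      have h2 : {ω | X ω < 0} = (∅ : Set Ω) := by
        ext ω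
        simp only [Set.mem_setOf_eq, Set.mem_empty_iff_false, iff_false, not_lt]
        exact hXnn ω
      rw [h2]
      simp [hatLam_zero hαL hαN]
  have hinner : ∀ y : ℝ, 0 ≤ y →
      νx {x | x < ρ * min y η₂}
        = ENNReal.ofReal (1 - Real.exp (-(hatLam β αL αN pTW cTW lam (ρ * min y η₂)))) := by
    intro y hy
    have hmin : 0 ≤ min y η₂ := le_min hy hη₂.le
    have hmap : νx {x | x < ρ * min y η₂} = μ {ω | X ω < ρ * min y η₂} := by
      have hs : MeasurableSet {x : ℝ | x < ρ * min y η₂} := measurableSet_Iio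
      rw [hνx, Measure.map_apply hX hs]
      rfl
    rw [hmap]
    exact hcdfX _ (by positivity)
  -- FTC rewrite
  have hftc : ∀ z : ℝ, 0 ≤ z →
      ENNReal.ofReal (1 - Real.exp (-(hatLam β αL αN pTW cTW lam (ρ * z))))
        = ∫⁻ w in Set.Ioo 0 z, ENNReal.ofReal (φ w) := by
    intro z hz
    have h1 := ftc_hat (p := pTW) (c := cTW) hlam hβ hαL hαN hρ hpTW hcTW hz
    have hφint : IntervalIntegrable φ MeasureTheory.volume 0 z :=
      intervalIntegrable_of_le_hat hlam hβ hαL hαN hρ hpTW hcTW hz hφm (hφbound z hz)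
    rw [← h1, intervalIntegral.integral_of_le hz,
      MeasureTheory.restrict_Ioo_eq_restrict_Ioc]
    exact MeasureTheory.ofReal_integral_eq_lintegral_ofReal hφint.1 (by
      filter_upwards [MeasureTheory.ae_restrict_mem measurableSet_Ioc] with w hw
      exact hφnn w hw.1.le)
  -- indicator rewrite
  have hindrw : ∀ y : ℝ, 0 ≤ y →
      (∫⁻ w in Set.Ioo 0 (min y η₂), ENNReal.ofReal (φ w))
        = ∫⁻ w in Set.Ioo 0 η₂, (if w < y then ENNReal.ofReal (φ w) else 0) := by
    intro y hy
    have hmeas : MeasurableSet {w : ℝ | w < y} := measurableSet_Iio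
    have hseteq : Set.Ioo 0 (min y η₂) = {w : ℝ | w < y} ∩ Set.Ioo 0 η₂ := by
      ext w
      simp only [Set.mem_Ioo, Set.mem_inter_iff, Set.mem_setOf_eq, lt_min_iff]
      tauto
    rw [hseteq, ← MeasureTheory.Measure.restrict_restrict hmeas,
      ← MeasureTheory.lintegral_indicator hmeas]
    apply MeasureTheory.lintegral_congr
    intro w
    simp [Set.indicator_apply]
  -- ccdf of Y
  have hccdfY : ∀ w : ℝ, 0 < w →
      νy {y | w < y} = ENNReal.ofReal (Real.exp (-(hatLam β αL αN pJR cJR lam w))) := by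
    intro w hw
    have h1 : {y : ℝ | w < y} = Set.Ioi w := rfl
    rw [hνy, h1, Measure.map_apply hY measurableSet_Ioi]
    exact hYccdf w hw.le
  -- main computation for the complement
  have key : μ {ω | X ω < ρ * min (Y ω) η₂} = ENNReal.ofReal (ρ * I) := by
    rw [step3]
    have hae_y : ∀ᵐ y ∂νy, 0 ≤ y := by
      rw [hνy]
      have hs : MeasurableSet {y : ℝ | 0 ≤ y} := measurableSet_Ici
      rw [MeasureTheory.ae_map_iff hY.aemeasurable hs]
      exact Filter.Eventually.of_forall hYnn
    have h1 : ∫⁻ y, νx {x | x < ρ * min y η₂} ∂νy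
        = ∫⁻ y, ∫⁻ w in Set.Ioo 0 η₂,
            (if w < y then ENNReal.ofReal (φ w) else 0) ∂MeasureTheory.volume ∂νy := by
      apply MeasureTheory.lintegral_congr_ae
      filter_upwards [hae_y] with y hy
      rw [hinner y hy, hftc _ (le_min hy hη₂.le), hindrw y hy]
    rw [h1]
    have hswapm : AEMeasurable (Function.uncurry fun (y : ℝ) (w : ℝ) =>
        if w < y then ENNReal.ofReal (φ w) else 0)
        (νy.prod (MeasureTheory.volume.restrict (Set.Ioo 0 η₂))) := by
      apply Measurable.aemeasurable
      exact Measurable.ite (measurableSet_lt measurable_snd measurable_fst)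
        ((ENNReal.measurable_ofReal.comp hφm).comp measurable_snd) measurable_const
    rw [MeasureTheory.lintegral_lintegral_swap hswapm]
    have h2 : ∫⁻ w in Set.Ioo 0 η₂, ∫⁻ y, (if w < y then ENNReal.ofReal (φ w) else 0) ∂νy
        = ∫⁻ w in Set.Ioo 0 η₂, ENNReal.ofReal (ψ w) := by
      apply MeasureTheory.lintegral_congr_ae
      filter_upwards [MeasureTheory.ae_restrict_mem measurableSet_Ioo] with w hw
      have h3 : (fun y : ℝ => if w < y then ENNReal.ofReal (φ w) else 0)
          = {y : ℝ | w < y}.indicator (fun _ => ENNReal.ofReal (φ w)) := by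
        funext y; simp [Set.indicator_apply]
      have hs4 : MeasurableSet {y : ℝ | w < y} := measurableSet_Ioi
      rw [h3, MeasureTheory.lintegral_indicator_const hs4, hccdfY w hw.1,
        ← ENNReal.ofReal_mul (hφnn w hw.1.le)]
    rw [h2]
    -- convert back to a Bochner integral
    have hψm : Measurable ψ := by
      apply hφm.mul
      exact (Real.continuous_exp.comp
        ((continuous_hatLam hαL hαN β pJR cJR lam).neg)).measurable
    have hψnn : ∀ w : ℝ, 0 ≤ w → 0 ≤ ψ w := by
      intro w hw
      have := hφnn w hw
      have := Real.exp_nonneg (-(hatLam β αL αN pJR cJR lam w))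
      rw [hψdef]
      positivity
    have hψle : ∀ w ∈ Set.Ioc (0:ℝ) η₂,
        |ψ w| ≤ ρ * hatLam' β αL αN pTW cTW lam (ρ * w) := by
      intro w hw
      have h4 : Real.exp (-(hatLam β αL αN pJR cJR lam w)) ≤ 1 := by
        rw [Real.exp_le_one_iff]
        have := hatLam_nonneg hαL hαN hβ hlam.le pJR cJR hpJR hcJR hw.1.le
        linarith
      have h5 : |ψ w| ≤ |φ w| := by
        rw [abs_of_nonneg (hψnn w hw.1.le), abs_of_nonneg (hφnn w hw.1.le), hψdef]
        have h6 := mul_le_mul_of_nonneg_left h4 (hφnn w hw.1.le)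
        simpa using h6
      exact h5.trans (hφbound η₂ hη₂.le w hw)
    have hψint : IntervalIntegrable ψ MeasureTheory.volume 0 η₂ :=
      intervalIntegrable_of_le_hat hlam hβ hαL hαN hρ hpTW hcTW hη₂.le hψm hψle
    have h7 : ENNReal.ofReal (∫ w in Set.Ioc (0:ℝ) η₂, ψ w)
        = ∫⁻ w in Set.Ioc (0:ℝ) η₂, ENNReal.ofReal (ψ w) :=
      MeasureTheory.ofReal_integral_eq_lintegral_ofReal hψint.1 (by
        filter_upwards [MeasureTheory.ae_restrict_mem measurableSet_Ioc] with w hw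
        exact hψnn w hw.1.le)
    rw [MeasureTheory.restrict_Ioo_eq_restrict_Ioc, ← h7]
    congr 1
    rw [← intervalIntegral.integral_of_le hη₂.le, hIdef, ← intervalIntegral.integral_const_mul]
    apply intervalIntegral.integral_congr
    intro w hw
    have hexp : Real.exp (-(hatLam β αL αN pTW cTW lam (ρ * w)
          + hatLam β αL αN pJR cJR lam w))
        = Real.exp (-(hatLam β αL αN pTW cTW lam (ρ * w)))
          * Real.exp (-(hatLam β αL αN pJR cJR lam w)) := by
      rw [← Real.exp_add]; ring_nf
    simp only [hψdef, hφdef, hexp]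
    ring
  -- finish
  have hInn : 0 ≤ I := by
    rw [hIdef]
    apply intervalIntegral.integral_nonneg hη₂.le
    intro u hu
    have h1 := Real.exp_nonneg (-(hatLam β αL αN pTW cTW lam (ρ * u)
      + hatLam β αL αN pJR cJR lam u))
    have h2 := hatLam'_nonneg hαL hαN hβ.le hlam.le pTW cTW hpTW hcTW
      (mul_nonneg hρ.le hu.1)
    exact mul_nonneg h1 h2
  have hfinal : μ {ω | ρ * min (Y ω) η₂ ≤ X ω} = 1 - ENNReal.ofReal (ρ * I) := by
    have h2 : (1:ENNReal) - (1 - μ {ω | ρ * min (Y ω) η₂ ≤ X ω})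
        = μ {ω | ρ * min (Y ω) η₂ ≤ X ω} :=
      ENNReal.sub_sub_cancel ENNReal.one_ne_top prob_le_one
    rw [← h2, ← hμcompl, key]
  rw [hfinal, ENNReal.ofReal_sub _ (by positivity : (0:ℝ) ≤ ρ * I), ENNReal.ofReal_one]
end
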